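/- arXiv:0809.3590 — 5 statements merged into one kernel-verified Lean document; each statement's English description precedes it below -/
import Mathlib

section
/- For every one-dimensional complex representation ρ : W → ℂ^× of W, there exists a continuous map F : X → ℂ^× such that F(w·x)·ρ(w) = F(x) for all w ∈ W and x ∈ X. (Equivalently, the quotient of the trivial line bundle X × ℂ → X by the W-action g·(x,u) = (g·x, ρ(g)u) is a topologically trivial line bundle over X/W.) -/
open Matrix

/-- A pseudo-reflection: a nonidentity element of `GL_n(ℂ)` whose fixed-point space
`ker(g - 1)` is a hyperplane (has codimension 1). -/
def IsPseudoReflection {n : ℕ} (g : GL (Fin n) ℂ) : Prop :=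
  g ≠ 1 ∧ Module.finrank ℂ
    (LinearMap.ker ((g : Matrix (Fin n) (Fin n) ℂ).mulVecLin - LinearMap.id)) = n - 1

/-- `W` is generated by its pseudo-reflections. -/
def IsGeneratedByPseudoReflections {n : ℕ} (W : Subgroup (GL (Fin n) ℂ)) : Prop :=
  Subgroup.closure {g : GL (Fin n) ℂ | g ∈ W ∧ IsPseudoReflection g} = W

/-- `W` acts irreducibly on `ℂ^n`. -/
def ActsIrreducibly {n : ℕ} (W : Subgroup (GL (Fin n) ℂ)) : Prop :=
  ∀ p : Submodule ℂ (Fin n → ℂ),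
    (∀ g ∈ W, ∀ v ∈ p, (g : Matrix (Fin n) (Fin n) ℂ).mulVec v ∈ p) → p = ⊥ ∨ p = ⊤

/-- The complement `X = V ∖ ⋃𝒜` of the union of the reflecting hyperplanes of `W`. -/
def hypComplement {n : ℕ} (W : Subgroup (GL (Fin n) ℂ)) : Set (Fin n → ℂ) :=
  {x | ∀ g ∈ W, IsPseudoReflection g → (g : Matrix (Fin n) (Fin n) ℂ).mulVec x ≠ x}

/-!
For a reflecting hyperplane `H` let `f_H` be a linear form with kernel `H`. The pointwise
stabiliser `W_H` of `H` acts on `V ⧸ H` through a character `θ_H` which is faithful: an element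
acting trivially on both `H` and `V ⧸ H` is unipotent, and a unipotent element of finite order
is trivial in characteristic zero. Hence `W_H` is cyclic and `ρ⁻¹` restricted to `W_H` is
`θ_H ^ a_H` for some `a_H : ℕ`, chosen canonically so that `a` is `W`-invariant. Put
`F = ∏_H f_H ^ a_H`; it is continuous and vanishes only on the hyperplanes. A reflection `s`
with hyperplane `H` multiplies `f_H ^ a_H` by `ρ(s)⁻¹` and permutes the other factors up to a
constant, which is `1` because `s` fixes `H` pointwise and the other factors do not vanish at a
generic point of `H`. Reflections generate `W`, so `F (w • x) * ρ w = F x` for all `w`.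
-/

open LinearMap (ker)

section

variable {K V : Type*} [Field K] [AddCommGroup V] [Module K V]

theorem Module.Dual.eq_smul_of_ker_le {f f' : Module.Dual K V} {v : V} (hv : f v = 1)
    (h : ker f ≤ ker f') : f' = f' v • f := by
  ext x
  have hx : f' (x - f x • v) = 0 := h (by simp [hv])
  simp only [map_sub, map_smul, smul_eq_mul] at hx
  simp only [LinearMap.smul_apply, smul_eq_mul]
  linear_combination hx

theorem Module.Dual.exists_ne_zero_eq_smul_of_ker_eq {f f' : Module.Dual K V} (hf : f ≠ 0)
    (h : ker f = ker f') : ∃ c : K, c ≠ 0 ∧ f' = c • f := by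
  obtain ⟨v, hv⟩ := LinearMap.surjective hf 1
  refine ⟨f' v, fun hc => hf ?_, eq_smul_of_ker_le hv h.le⟩
  rw [← LinearMap.ker_eq_top, h, LinearMap.ker_eq_top, eq_smul_of_ker_le hv h.le, hc, zero_smul]

theorem Submodule.exists_dual_ker_eq_of_isCoatom {H : Submodule K V} (hH : IsCoatom H) :
    ∃ f : Module.Dual K V, ker f = H := by
  obtain ⟨f, hf, hHf⟩ := H.exists_le_ker_of_lt_top hH.lt_top
  exact ⟨f, (hH.le_iff_eq (by rwa [Ne, LinearMap.ker_eq_top])).mp hHf⟩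

/-- A linear form with kernel `H` when `H` is a hyperplane; junk otherwise. -/
noncomputable def Submodule.definingForm (H : Submodule K V) : Module.Dual K V :=
  Classical.epsilon fun f => ker f = H

theorem Submodule.ker_definingForm {H : Submodule K V} (hH : IsCoatom H) :
    ker H.definingForm = H :=
  Classical.epsilon_spec (Submodule.exists_dual_ker_eq_of_isCoatom hH)

theorem Submodule.definingForm_ne_zero {H : Submodule K V} (hH : IsCoatom H) :
    H.definingForm ≠ 0 := by
  rw [Ne, ← LinearMap.ker_eq_top, Submodule.ker_definingForm hH]
  exact hH.1

theorem Submodule.exists_mem_forall_notMem [Infinite K] {H : Submodule K V}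
    (S : Finset (Submodule K V)) (hS : ∀ L ∈ S, ¬H ≤ L) : ∃ x ∈ H, ∀ L ∈ S, x ∉ L := by
  classical
  have htop : ⊤ ∉ S.image (Submodule.comap H.subtype) := by
    simpa only [Finset.mem_image, Submodule.comap_subtype_eq_top, not_exists, not_and] using hS
  obtain ⟨y, hy⟩ := (Set.ne_univ_iff_exists_notMem _).mp
    (Subspace.biUnion_ne_univ_of_top_notMem htop)
  simp only [Finset.mem_image, Set.mem_iUnion, exists_prop, not_exists, not_and] at hy
  exact ⟨y, y.2, fun L hL hyL => hy _ ⟨L, hL, rfl⟩ hyL⟩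

theorem Submodule.isCoatom_iff_finrank_add_one [FiniteDimensional K V] {H : Submodule K V} :
    IsCoatom H ↔ Module.finrank K H + 1 = Module.finrank K V := by
  rw [← isSimpleModule_iff_isCoatom, isSimpleModule_iff_finrank_eq_one,
    ← H.finrank_quotient_add_finrank]
  omega

theorem one_add_pow_of_sq_eq_zero {A : Type*} [Ring A] {N : A} (hN : N ^ 2 = 0) (m : ℕ) :
    (1 + N) ^ m = 1 + m • N := by
  induction m with
  | zero => simp
  | succ m ih =>
    rw [pow_succ, ih, add_mul, one_mul, mul_add, mul_one, smul_mul_assoc, ← sq, hN, smul_zero,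
      succ_nsmul]
    abel

theorem Module.End.eq_one_of_pow_eq_one_of_sq_sub_one_eq_zero [CharZero K] {T : Module.End K V}
    {m : ℕ} (hm : m ≠ 0) (hTm : T ^ m = 1) (hT : (T - 1) ^ 2 = 0) : T = 1 := by
  have h := one_add_pow_of_sq_eq_zero hT m
  rw [add_sub_cancel, hTm, left_eq_add, ← Nat.cast_smul_eq_nsmul K, smul_eq_zero,
    Nat.cast_eq_zero] at h
  exact sub_eq_zero.mp (h.resolve_left hm)

end

theorem MonoidHom.exists_eq_pow_of_injective {G R : Type*} [Group G] [Finite G] [CommRing R]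
    [IsDomain R] {θ : G →* Rˣ} (hθ : Function.Injective θ) (χ : G →* Rˣ) :
    ∃ a : ℕ, χ = θ ^ a := by
  have : IsCyclic G :=
    isCyclic_of_injective_ringHom ((Units.coeHom R).comp θ) (Units.val_injective.comp hθ)
  obtain ⟨g, hg⟩ := IsCyclic.exists_generator (α := G)
  have : NeZero (orderOf g) := ⟨(orderOf_pos g).ne'⟩
  have hprim : IsPrimitiveRoot (θ g) (orderOf g) :=
    orderOf_injective θ hθ g ▸ IsPrimitiveRoot.orderOf _
  obtain ⟨a, -, ha⟩ := hprim.eq_pow_of_mem_rootsOfUnity (ξ := χ g)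
    (by rw [mem_rootsOfUnity, ← map_pow, pow_orderOf_eq_one, map_one])
  exact ⟨a, (MonoidHom.eq_iff_eq_on_generator hg _ _).mpr (by simp [ha])⟩

namespace Representation

variable {K G V : Type*} [Field K] [Group G] [AddCommGroup V] [Module K V]
  (π : Representation K G V)

def fixingSubgroup (H : Submodule K V) : Subgroup G where
  carrier := {g | ∀ v ∈ H, π g v = v}
  mul_mem' {g h} hg hh v hv := by rw [map_mul, Module.End.mul_apply, hh v hv, hg v hv]
  one_mem' v _ := by rw [map_one, Module.End.one_apply]
  inv_mem' {g} hg v hv := by rw [inv_apply_eq_iff, hg v hv]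

variable {π}

theorem mem_fixingSubgroup_comap {H : Submodule K V} {g : G} (w : G) :
    g ∈ π.fixingSubgroup (H.comap (π w)) ↔ w * g * w⁻¹ ∈ π.fixingSubgroup H := by
  constructor
  · intro hg v hv
    have hv' : π w⁻¹ v ∈ H.comap (π w) := by simpa using hv
    simp [hg _ hv']
  · intro hg v hv
    have := hg _ hv
    simp only [map_mul, Module.End.mul_apply] at this
    simpa using congrArg (π w⁻¹) this

theorem comap_eq_of_mem_fixingSubgroup {H : Submodule K V} {g : G}
    (hg : g ∈ π.fixingSubgroup H) : H.comap (π g) = H := by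
  ext x
  refine ⟨fun hx => ?_, fun hx => by simpa [hg x hx] using hx⟩
  have h := (π.fixingSubgroup H).inv_mem hg _ hx
  rw [inv_self_apply] at h
  rwa [Submodule.mem_comap, ← h] at hx

theorem comap_ne_of_mem_fixingSubgroup {H L : Submodule K V} {g : G}
    (hg : g ∈ π.fixingSubgroup H) (hLH : L ≠ H) : L.comap (π g) ≠ H := fun h =>
  hLH (Submodule.comap_injective_of_surjective (π.apply_bijective g).2
    (h.trans (comap_eq_of_mem_fixingSubgroup hg).symm))

theorem mem_fixingSubgroup_ker_sub_one (g : G) : g ∈ π.fixingSubgroup (ker (π g - 1)) :=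
  fun _ hv => sub_eq_zero.mp hv

variable (π) in
def relInvariantSubgroup (ρ : G →* Kˣ) (F : V → K) : Subgroup G where
  carrier := {g | ∀ x, F (π g x) * ρ g = F x}
  mul_mem' {g h} hg hh x := by
    rw [map_mul, Module.End.mul_apply, map_mul, Units.val_mul, ← mul_assoc, hg, hh]
  one_mem' x := by simp
  inv_mem' {g} hg x := by
    rw [← hg (π g⁻¹ x), self_inv_apply, mul_assoc, ← Units.val_mul, ← map_mul, mul_inv_cancel,
      map_one, Units.val_one, mul_one]

theorem relInvariantSubgroup_const_mul (ρ : G →* Kˣ) (F : V → K) {c : K} (hc : c ≠ 0) :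
    π.relInvariantSubgroup ρ (fun x => c * F x) = π.relInvariantSubgroup ρ F := by
  ext g
  refine forall_congr' fun x => ?_
  rw [mul_assoc, mul_right_inj' hc]

theorem mem_relInvariantSubgroup_comp (ρ : G →* Kˣ) (F : V → K) {g : G} (w : G) :
    g ∈ π.relInvariantSubgroup ρ (fun x => F (π w x)) ↔
      w * g * w⁻¹ ∈ π.relInvariantSubgroup ρ F := by
  have hρ : ρ (w * g * w⁻¹) = ρ g := by simp [mul_comm (ρ w)]
  constructor
  · intro hg y
    simpa [hρ] using hg (π w⁻¹ y)
  · intro hg x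
    simpa [hρ] using hg (π w x)

theorem fixingSubgroup_comap_le_relInvariantSubgroup_comp_iff (ρ : G →* Kˣ) (F : V → K)
    (H : Submodule K V) (w : G) :
    π.fixingSubgroup (H.comap (π w)) ≤ π.relInvariantSubgroup ρ (fun x => F (π w x)) ↔
      π.fixingSubgroup H ≤ π.relInvariantSubgroup ρ F := by
  constructor
  · intro h g hg
    have hg' : w⁻¹ * g * w ∈ π.fixingSubgroup (H.comap (π w)) :=
      (mem_fixingSubgroup_comap w).mpr (by simpa [mul_assoc] using hg)
    simpa [mul_assoc] using (mem_relInvariantSubgroup_comp ρ F w).mp (h hg')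
  · intro h g hg
    exact (mem_relInvariantSubgroup_comp ρ F w).mpr (h ((mem_fixingSubgroup_comap w).mp hg))

theorem comap_inv_comap (H : Submodule K V) (w : G) :
    (H.comap (π w)).comap (π w⁻¹) = H := by
  ext; simp

theorem dual_apply_eq_mul_of_mem_fixingSubgroup {f : Module.Dual K V} {v : V} (hv : f v = 1)
    {g : G} (hg : g ∈ π.fixingSubgroup (ker f)) (x : V) : f (π g x) = f (π g v) * f x :=
  LinearMap.congr_fun (Module.Dual.eq_smul_of_ker_le (f' := f ∘ₗ π g) hv
    fun y hy => by simp_all [hg y hy]) x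

variable (π) in
/-- The scalar by which `g` acts on the line `V ⧸ ker f`. -/
@[simps]
def fixingCharacter (f : Module.Dual K V) {v : V} (hv : f v = 1) :
    π.fixingSubgroup (ker f) →* K where
  toFun g := f (π g v)
  map_one' := by simp [hv]
  map_mul' g h := by
    simp only [Subgroup.coe_mul, map_mul, Module.End.mul_apply]
    exact dual_apply_eq_mul_of_mem_fixingSubgroup hv g.2 _

theorem fixingCharacter_toHomUnits_injective [Finite G] [CharZero K] (hπ : Function.Injective π)
    {f : Module.Dual K V} {v : V} (hv : f v = 1) :
    Function.Injective (π.fixingCharacter f hv).toHomUnits := by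
  refine (injective_iff_map_eq_one _).mpr fun g hg => ?_
  have hgv : f (π g v) = 1 := congrArg Units.val hg
  have hf : ∀ x, f (π g x) = f x := fun x => by
    rw [dual_apply_eq_mul_of_mem_fixingSubgroup hv g.2, hgv, one_mul]
  have hsq : (π g - 1) ^ 2 = 0 := by
    ext x
    have hx : π g x - x ∈ ker f := by simp [hf]
    simp [sq, g.2 _ hx]
  have hpow : π g ^ orderOf g = 1 := by
    rw [← map_pow, ← Subgroup.coe_pow, pow_orderOf_eq_one, Subgroup.coe_one, map_one]
  have h1 := Module.End.eq_one_of_pow_eq_one_of_sq_sub_one_eq_zero (orderOf_pos g).ne' hpow hsq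
  exact Subtype.ext (hπ (h1.trans (map_one π).symm))

theorem exists_fixingSubgroup_le_relInvariantSubgroup_pow [Finite G] [CharZero K]
    (hπ : Function.Injective π) (ρ : G →* Kˣ) {f : Module.Dual K V} (hf : f ≠ 0) :
    ∃ a : ℕ, π.fixingSubgroup (ker f) ≤ π.relInvariantSubgroup ρ fun x => f x ^ a := by
  obtain ⟨v, hv⟩ := LinearMap.surjective hf 1
  obtain ⟨a, ha⟩ := MonoidHom.exists_eq_pow_of_injective
    (fixingCharacter_toHomUnits_injective hπ hv) (ρ.comp (π.fixingSubgroup (ker f)).subtype)⁻¹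
  refine ⟨a, fun g hg x => show f (π g x) ^ a * ρ g = f x ^ a from ?_⟩
  have hρ : ((ρ g : K))⁻¹ = f (π g v) ^ a := by
    simpa using congrArg Units.val (DFunLike.congr_fun ha ⟨g, hg⟩)
  rw [dual_apply_eq_mul_of_mem_fixingSubgroup hv hg, mul_pow, ← hρ, mul_right_comm,
    inv_mul_cancel₀ (Units.ne_zero _), one_mul]

variable (π) in
def reflectingHyperplanes : Set (Submodule K V) :=
  {H | IsCoatom H ∧ ∃ g, ker (π g - 1) = H}

theorem reflectingHyperplanes_finite [Finite G] : π.reflectingHyperplanes.Finite :=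
  (Set.finite_range fun g => ker (π g - 1)).subset fun _ ⟨_, hg⟩ => hg

theorem comap_mem_reflectingHyperplanes {H : Submodule K V} (hH : H ∈ π.reflectingHyperplanes)
    (w : G) : H.comap (π w) ∈ π.reflectingHyperplanes := by
  obtain ⟨hH, g, rfl⟩ := hH
  refine ⟨(Submodule.isCoatom_comap_iff (π.apply_bijective w).2).mpr hH, w⁻¹ * g * w, ?_⟩
  ext x
  simp [sub_eq_zero, inv_apply_eq_iff]

variable (π) in
/-- Taking the least admissible exponent makes it invariant under `G`
(`hyperplaneExponent_comap`). -/
noncomputable def hyperplaneExponent (ρ : G →* Kˣ) (H : Submodule K V) : ℕ :=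
  sInf {a | π.fixingSubgroup H ≤ π.relInvariantSubgroup ρ fun x => H.definingForm x ^ a}

theorem fixingSubgroup_le_relInvariantSubgroup_hyperplaneExponent [Finite G] [CharZero K]
    (hπ : Function.Injective π) (ρ : G →* Kˣ) {H : Submodule K V} (hH : IsCoatom H) :
    π.fixingSubgroup H ≤
      π.relInvariantSubgroup ρ fun x => H.definingForm x ^ π.hyperplaneExponent ρ H := by
  have h := exists_fixingSubgroup_le_relInvariantSubgroup_pow hπ ρ
    (Submodule.definingForm_ne_zero hH)
  rw [Submodule.ker_definingForm hH] at h
  exact Nat.sInf_mem h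

theorem definingForm_comp_eq_smul {H : Submodule K V} (hH : IsCoatom H) (w : G) :
    ∃ c : K, c ≠ 0 ∧ H.definingForm ∘ₗ π w = c • (H.comap (π w)).definingForm := by
  have hH' : IsCoatom (H.comap (π w)) :=
    (Submodule.isCoatom_comap_iff (π.apply_bijective w).2).mpr hH
  refine Module.Dual.exists_ne_zero_eq_smul_of_ker_eq (Submodule.definingForm_ne_zero hH') ?_
  rw [LinearMap.ker_comp, Submodule.ker_definingForm hH, Submodule.ker_definingForm hH']

theorem hyperplaneExponent_comap (ρ : G →* Kˣ) {H : Submodule K V} (hH : IsCoatom H) (w : G) :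
    π.hyperplaneExponent ρ (H.comap (π w)) = π.hyperplaneExponent ρ H := by
  obtain ⟨c, hc, hfc⟩ := definingForm_comp_eq_smul hH w
  unfold hyperplaneExponent
  congr 1
  ext a
  have hpow : (fun x => H.definingForm (π w x) ^ a) =
      fun x => c ^ a * (H.comap (π w)).definingForm x ^ a := by
    funext x
    rw [← LinearMap.comp_apply, hfc, LinearMap.smul_apply, smul_eq_mul, mul_pow]
  rw [Set.mem_ofPred_eq, Set.mem_ofPred_eq,
    ← fixingSubgroup_comap_le_relInvariantSubgroup_comp_iff ρ _ H w, hpow,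
    relInvariantSubgroup_const_mul ρ _ (pow_ne_zero a hc)]

variable (π) in
noncomputable def hyperplaneProduct (ρ : G →* Kˣ) (S : Finset (Submodule K V)) (x : V) : K :=
  ∏ H ∈ S, H.definingForm x ^ π.hyperplaneExponent ρ H

theorem hyperplaneProduct_ne_zero (ρ : G →* Kˣ) {S : Finset (Submodule K V)}
    (hS : ∀ H ∈ S, IsCoatom H) {x : V} (hx : ∀ H ∈ S, x ∉ H) :
    π.hyperplaneProduct ρ S x ≠ 0 :=
  Finset.prod_ne_zero_iff.mpr fun H hH => pow_ne_zero _ fun h =>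
    hx H hH (Submodule.ker_definingForm (hS H hH) ▸ h)

theorem exists_hyperplaneProduct_apply_eq_mul (ρ : G →* Kˣ) {S : Finset (Submodule K V)}
    (hS : ∀ H ∈ S, IsCoatom H) {w : G} (hw : ∀ H ∈ S, H.comap (π w) ∈ S)
    (hw' : ∀ H ∈ S, H.comap (π w⁻¹) ∈ S) :
    ∃ c : K, ∀ x, π.hyperplaneProduct ρ S (π w x) = c * π.hyperplaneProduct ρ S x := by
  choose! c hc using fun H (hH : H ∈ S) =>
    (definingForm_comp_eq_smul (π := π) (hS H hH) w).imp fun _ => And.right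
  refine ⟨∏ H ∈ S, c H ^ π.hyperplaneExponent ρ H, fun x => ?_⟩
  have hfactor : ∀ H ∈ S, H.definingForm (π w x) ^ π.hyperplaneExponent ρ H =
      c H ^ π.hyperplaneExponent ρ H * (H.comap (π w)).definingForm x ^
        π.hyperplaneExponent ρ (H.comap (π w)) := fun H hH => by
    rw [hyperplaneExponent_comap ρ (hS H hH), ← LinearMap.comp_apply, hc H hH,
      LinearMap.smul_apply, smul_eq_mul, mul_pow]
  rw [hyperplaneProduct, Finset.prod_congr rfl hfactor, Finset.prod_mul_distrib, hyperplaneProduct]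
  congr 1
  refine Finset.prod_nbij' (fun H => H.comap (π w)) (fun H => H.comap (π w⁻¹)) hw hw'
    (fun H _ => comap_inv_comap H w) (fun H _ => ?_) (fun _ _ => rfl)
  simpa using comap_inv_comap H w⁻¹

variable (π) in
noncomputable def semiInvariant [Finite G] (ρ : G →* Kˣ) : V → K :=
  π.hyperplaneProduct ρ π.reflectingHyperplanes_finite.toFinset

theorem semiInvariant_ne_zero [Finite G] (ρ : G →* Kˣ) {x : V}
    (hx : ∀ H ∈ π.reflectingHyperplanes, x ∉ H) : π.semiInvariant ρ x ≠ 0 :=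
  hyperplaneProduct_ne_zero ρ (fun _ hH => (Set.Finite.mem_toFinset _ |>.mp hH).1)
    fun H hH => hx H (Set.Finite.mem_toFinset _ |>.mp hH)

theorem mem_relInvariantSubgroup_semiInvariant_of_isCoatom [Finite G] [CharZero K]
    (hπ : Function.Injective π) (ρ : G →* Kˣ) {s : G} (hs : IsCoatom (ker (π s - 1))) :
    s ∈ π.relInvariantSubgroup ρ (π.semiInvariant ρ) := by
  set H := ker (π s - 1)
  set A := π.reflectingHyperplanes_finite.toFinset
  have hA : ∀ L, L ∈ A ↔ L ∈ π.reflectingHyperplanes := fun L => Set.Finite.mem_toFinset _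
  have hHA : H ∈ A := (hA H).mpr ⟨hs, s, rfl⟩
  have hsH : s ∈ π.fixingSubgroup H := mem_fixingSubgroup_ker_sub_one s
  have hcoatom : ∀ L ∈ A.erase H, IsCoatom L := fun L hL =>
    ((hA L).mp (Finset.mem_of_mem_erase hL)).1
  have hstable : ∀ g ∈ π.fixingSubgroup H, ∀ L ∈ A.erase H, L.comap (π g) ∈ A.erase H := by
    intro g hg L hL
    obtain ⟨hLH, hLA⟩ := Finset.mem_erase.mp hL
    exact Finset.mem_erase.mpr ⟨comap_ne_of_mem_fixingSubgroup hg hLH,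
      (hA _).mpr (comap_mem_reflectingHyperplanes ((hA L).mp hLA) g)⟩
  obtain ⟨c, hc⟩ := exists_hyperplaneProduct_apply_eq_mul ρ hcoatom (hstable s hsH)
    (hstable s⁻¹ (inv_mem hsH))
  -- `c = 1`: evaluate at a point of `H` that lies on no other reflecting hyperplane
  have hc1 : c = 1 := by
    obtain ⟨x₀, hx₀H, hx₀⟩ := Submodule.exists_mem_forall_notMem (A.erase H) fun L hL hHL =>
      Finset.ne_of_mem_erase hL ((hs.le_iff_eq (hcoatom L hL).1).mp hHL)
    have h := hc x₀
    rw [hsH x₀ hx₀H] at h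
    exact (mul_eq_right₀ (hyperplaneProduct_ne_zero ρ hcoatom hx₀)).mp h.symm
  have hsplit : ∀ y, π.hyperplaneProduct ρ A y =
      H.definingForm y ^ π.hyperplaneExponent ρ H * π.hyperplaneProduct ρ (A.erase H) y :=
    fun y => (Finset.mul_prod_erase A _ hHA).symm
  intro x
  have hlocal := fixingSubgroup_le_relInvariantSubgroup_hyperplaneExponent hπ ρ hs hsH x
  change π.hyperplaneProduct ρ A (π s x) * ρ s = π.hyperplaneProduct ρ A x
  rw [hsplit, hsplit, hc, hc1, one_mul, mul_right_comm, hlocal]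

theorem relInvariantSubgroup_semiInvariant_eq_top [Finite G] [CharZero K]
    (hπ : Function.Injective π) (ρ : G →* Kˣ)
    (hgen : Subgroup.closure {g | IsCoatom (ker (π g - 1))} = ⊤) :
    π.relInvariantSubgroup ρ (π.semiInvariant ρ) = ⊤ :=
  top_le_iff.mp (hgen ▸ (Subgroup.closure_le _).mpr
    fun _ hs => mem_relInvariantSubgroup_semiInvariant_of_isCoatom hπ ρ hs)

end Representation

theorem Representation.continuous_semiInvariant {K G V : Type*} [NontriviallyNormedField K]
    [CompleteSpace K] [Group G] [Finite G] [AddCommGroup V] [Module K V] [TopologicalSpace V]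
    [IsTopologicalAddGroup V] [ContinuousSMul K V] [T2Space V] [FiniteDimensional K V]
    (π : Representation K G V) (ρ : G →* Kˣ) : Continuous (π.semiInvariant ρ) :=
  continuous_finsetProd _ fun H _ =>
    (LinearMap.continuous_of_finiteDimensional H.definingForm).pow _

namespace Matrix.GeneralLinearGroup

variable {ι R : Type*} [Fintype ι] [DecidableEq ι] [CommSemiring R]

@[simps]
def mulVecRep : Representation R (GL ι R) (ι → R) where
  toFun g := (g : Matrix ι ι R).mulVecLin
  map_one' := Matrix.mulVecLin_one
  map_mul' _ _ := Matrix.mulVecLin_mul _ _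

theorem mulVecRep_injective : Function.Injective (mulVecRep : Representation R (GL ι R) _) :=
  fun g h hgh => Units.ext <| Matrix.toLin'.injective <| by
    rw [Matrix.toLin'_apply', Matrix.toLin'_apply']
    exact hgh

end Matrix.GeneralLinearGroup

open Matrix.GeneralLinearGroup

theorem isPseudoReflection_iff_isCoatom {n : ℕ} (g : GL (Fin n) ℂ) :
    IsPseudoReflection g ↔ IsCoatom (ker (mulVecRep g - 1)) := by
  rw [IsPseudoReflection, show (g : Matrix (Fin n) (Fin n) ℂ).mulVecLin - LinearMap.id =
    mulVecRep g - 1 from rfl, Submodule.isCoatom_iff_finrank_add_one, Module.finrank_fin_fun]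
  constructor
  · rintro ⟨hg, hrank⟩
    have hne : ker (mulVecRep g - 1) ≠ ⊤ := fun h => hg <| mulVecRep_injective <| by
      rw [map_one, ← sub_eq_zero, ← LinearMap.ker_eq_top, h]
    have := Submodule.finrank_lt hne
    rw [Module.finrank_fin_fun] at this
    omega
  · intro h
    refine ⟨fun hg => ?_, by omega⟩
    rw [hg, map_one, sub_self, LinearMap.ker_zero, finrank_top, Module.finrank_fin_fun] at h
    omega

theorem notMem_of_mem_hypComplement {n : ℕ} {W : Subgroup (GL (Fin n) ℂ)} {x : Fin n → ℂ}
    (hx : x ∈ hypComplement W) :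
    ∀ H ∈ Representation.reflectingHyperplanes (mulVecRep.comp W.subtype), x ∉ H := by
  rintro H ⟨hH, w, rfl⟩ hxH
  refine hx w w.2 ((isPseudoReflection_iff_isCoatom _).mpr hH) ?_
  simpa [sub_eq_zero] using hxH

theorem IsGeneratedByPseudoReflections.closure_eq_top {n : ℕ} {W : Subgroup (GL (Fin n) ℂ)}
    (hgen : IsGeneratedByPseudoReflections W) :
    Subgroup.closure {w : W | IsCoatom (ker (mulVecRep.comp W.subtype w - 1))} = ⊤ := by
  apply Subgroup.map_injective W.subtype_injective
  rw [MonoidHom.map_closure, ← MonoidHom.range_eq_map, W.range_subtype]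
  refine (congrArg Subgroup.closure ?_).trans hgen
  ext g
  simp [isPseudoReflection_iff_isCoatom, and_comm]

theorem one_dimensional_kz_bundle_trivial_general (n : ℕ)
    (W : Subgroup (GL (Fin n) ℂ)) (hfin : (W : Set (GL (Fin n) ℂ)).Finite)
    (hgen : IsGeneratedByPseudoReflections W)
    (ρ : W →* ℂˣ) :
    ∃ F : (Fin n → ℂ) → ℂ,
      ContinuousOn F (hypComplement W) ∧
      (∀ x ∈ hypComplement W, F x ≠ 0) ∧
      (∀ (w : W), ∀ x ∈ hypComplement W,
        F (((w : GL (Fin n) ℂ) : Matrix (Fin n) (Fin n) ℂ).mulVec x) * (ρ w : ℂ)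
          = F x) := by
  have : Finite W := hfin.to_subtype
  set π : Representation ℂ W (Fin n → ℂ) := mulVecRep.comp W.subtype
  have hπ : Function.Injective π := mulVecRep_injective.comp W.subtype_injective
  have hinv := π.relInvariantSubgroup_semiInvariant_eq_top hπ ρ hgen.closure_eq_top
  exact ⟨π.semiInvariant ρ, (π.continuous_semiInvariant ρ).continuousOn,
    fun x hx => π.semiInvariant_ne_zero ρ (notMem_of_mem_hypComplement hx),
    fun w x _ => (Subgroup.eq_top_iff' _).mp hinv w x⟩

/-- **Line bundles attached to one-dimensional representations of a reflection group are
topologically trivial.** For every one-dimensional representation `ρ : W → ℂ^×` there is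
a continuous nonvanishing function `F` on the hyperplane complement `X` with
`F(w·x)·ρ(w) = F(x)`; equivalently the quotient of the trivial line bundle `X × ℂ → X`
by the `W`-action `g·(x,u) = (g·x, ρ(g)u)` is a topologically trivial line bundle
over `X/W`. -/
theorem one_dimensional_kz_bundle_trivial (n : ℕ) (hn : 1 ≤ n)
    (W : Subgroup (GL (Fin n) ℂ)) (hfin : (W : Set (GL (Fin n) ℂ)).Finite)
    (hgen : IsGeneratedByPseudoReflections W) (hirr : ActsIrreducibly W)
    (ρ : W →* ℂˣ) :
    ∃ F : (Fin n → ℂ) → ℂ,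
      ContinuousOn F (hypComplement W) ∧
      (∀ x ∈ hypComplement W, F x ≠ 0) ∧
      (∀ (w : W), ∀ x ∈ hypComplement W,
        F (((w : GL (Fin n) ℂ) : Matrix (Fin n) (Fin n) ℂ).mulVec x) * (ρ w : ℂ)
          = F x) :=
  one_dimensional_kz_bundle_trivial_general n W hfin hgen ρ
end

section
/- Let d, e ≥ 1 and r ≥ 4, and let W_r = G(de,e,r) with W_{r−1} = G(de,e,r−1) embedded as the subgroup fixing the last standard basis vector. If p : W_r → Q is a group homomorphism such that the image p(W_{r−1}) is a commutative subgroup of Q, then the image p(W_r) is commutative. -/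
noncomputable section

open Matrix

/-- The monomial matrix with nonzero entries `c j` at positions `(σ j, j)`. -/
def monoMat {r : ℕ} (σ : Equiv.Perm (Fin r)) (c : Fin r → ℂ) :
    Matrix (Fin r) (Fin r) ℂ :=
  Matrix.of fun i j => if i = σ j then c j else 0

lemma monoMat_mul {r : ℕ} (σ τ : Equiv.Perm (Fin r)) (c b : Fin r → ℂ) :
    monoMat σ c * monoMat τ b = monoMat (σ * τ) (fun j => c (τ j) * b j) := by
  ext i k
  simp only [monoMat, Matrix.mul_apply, Matrix.of_apply]
  rw [Finset.sum_eq_single (τ k)]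
  · by_cases h : i = σ (τ k) <;> simp [h, Equiv.Perm.mul_apply]
  · intro j _ hj; simp [hj]
  · intro h; exact absurd (Finset.mem_univ _) h

lemma monoMat_one {r : ℕ} : monoMat (1 : Equiv.Perm (Fin r)) 1 = 1 := by
  ext i j
  simp [monoMat, Matrix.one_apply]
  congr

/-- `A` is a monomial matrix whose nonzero entries are `d*e`-th roots of unity, the
product of the nonzero entries being a `d`-th root of unity. -/
def IsGMonomial (d e : ℕ) {r : ℕ} (A : Matrix (Fin r) (Fin r) ℂ) : Prop :=
  ∃ (σ : Equiv.Perm (Fin r)) (c : Fin r → ℂ),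
    (∀ i, c i ^ (d * e) = 1) ∧ (∏ i, c i) ^ d = 1 ∧ A = monoMat σ c

/-- The complex reflection group `G(de,e,r)`, as a subgroup of `GL_r(ℂ)`. -/
def Gdeer (d e r : ℕ) : Subgroup (GL (Fin r) ℂ) where
  carrier := {A | IsGMonomial d e (A : Matrix (Fin r) (Fin r) ℂ)}
  one_mem' := ⟨1, 1, by simp, by simp, by simp [monoMat_one]⟩
  mul_mem' := by
    rintro A B ⟨σ, c, hc, hcp, hA⟩ ⟨τ, b, hb, hbp, hB⟩
    refine ⟨σ * τ, fun j => c (τ j) * b j, fun i => by rw [mul_pow, hc, hb, mul_one], ?_, ?_⟩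
    · rw [Finset.prod_mul_distrib, Equiv.prod_comp τ c, mul_pow, hcp, hbp, mul_one]
    · rw [Units.val_mul, hA, hB, monoMat_mul]
  inv_mem' := by
    rintro A ⟨σ, c, hc, hcp, hA⟩
    have hcne : ∀ j, c j ≠ 0 := by
      intro j hj
      have h1 : ((A : Matrix (Fin r) (Fin r) ℂ) * ((A⁻¹ : GL (Fin r) ℂ) :
          Matrix (Fin r) (Fin r) ℂ)) (σ j) (σ j) = 1 := by
        rw [← Units.val_mul, mul_inv_cancel]
        simp [Matrix.one_apply]
      rw [hA, Matrix.mul_apply, Finset.sum_eq_single j] at h1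
      · simp [monoMat, hj] at h1
      · intro k _ hk
        have hne : σ j ≠ σ k := fun h => hk (Equiv.injective σ h).symm
        simp [monoMat, hne]
      · intro h; exact absurd (Finset.mem_univ _) h
    have hAB : (A : Matrix (Fin r) (Fin r) ℂ) *
        monoMat σ⁻¹ (fun j => (c (σ⁻¹ j))⁻¹) = 1 := by
      rw [hA, monoMat_mul]
      have hone : (fun j => c (σ⁻¹ j) * (c (σ⁻¹ j))⁻¹) = (1 : Fin r → ℂ) := by
        funext j; exact mul_inv_cancel₀ (hcne _)
      rw [mul_inv_cancel, hone, monoMat_one]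
    refine ⟨σ⁻¹, fun j => (c (σ⁻¹ j))⁻¹, fun i => by rw [inv_pow, hc, inv_one], ?_, ?_⟩
    · rw [Finset.prod_inv_distrib, Equiv.prod_comp σ⁻¹ c, inv_pow, hcp, inv_one]
    · calc ((A⁻¹ : GL (Fin r) ℂ) : Matrix (Fin r) (Fin r) ℂ)
          = ((A⁻¹ : GL (Fin r) ℂ) : Matrix (Fin r) (Fin r) ℂ) *
            ((A : Matrix (Fin r) (Fin r) ℂ) *
              monoMat σ⁻¹ (fun j => (c (σ⁻¹ j))⁻¹)) := by rw [hAB, mul_one]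
        _ = (((A⁻¹ * A : GL (Fin r) ℂ)) : Matrix (Fin r) (Fin r) ℂ) *
              monoMat σ⁻¹ (fun j => (c (σ⁻¹ j))⁻¹) := by rw [Units.val_mul, mul_assoc]
        _ = monoMat σ⁻¹ (fun j => (c (σ⁻¹ j))⁻¹) := by
              rw [inv_mul_cancel, Units.val_one, one_mul]

/-- `A` fixes the last `k` standard basis vectors of `ℂ^r`, i.e. its columns of index
`≥ r - k` agree with those of the identity matrix.  This characterizes the standard
embedding of `G(de,e,r-k)` inside `G(de,e,r)`. -/
def FixesLastVectors {r : ℕ} (k : ℕ) (A : GL (Fin r) ℂ) : Prop :=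
  ∀ j : Fin r, r - k ≤ (j : ℕ) →
    ∀ i, (A : Matrix (Fin r) (Fin r) ℂ) i j = (1 : Matrix (Fin r) (Fin r) ℂ) i j

/-! `G(de,e,r)` is generated by its elements that move at most two standard basis vectors:
a permutation matrix is a product of transpositions, and a diagonal element `diag u` factors
as `diag(∏ u at L) · ∏ₐ diag(u a at a, (u a)⁻¹ at L)`. Two such generators either move disjoint
sets of basis vectors, and then already commute, or together move at most three of them. In the
latter case, as `r ≥ 4`, they fix a common basis vector `e_m`, and conjugation by the
transposition of `m` and `r` carries both into `G(de,e,r-1)`, on which `p` is commutative. -/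

section

variable {G Q : Type*} [Group G] [Group Q]

theorem commute_map_of_closure_eq_top {X : Set G} (hX : Subgroup.closure X = ⊤) (f : G →* Q)
    (hXf : ∀ x ∈ X, ∀ y ∈ X, Commute (f x) (f y)) (a b : G) : Commute (f a) (f b) := by
  have hmem : ∀ g, f g ∈ Set.centralizer (Set.centralizer (f '' X)) := fun g ↦
    Subgroup.closure_le_centralizer_centralizer _ <| by
      rw [← MonoidHom.map_closure, hX]; exact Subgroup.mem_map_of_mem f (Subgroup.mem_top g)
  refine Set.centralizer_centralizer_comm_of_comm ?_ _ (hmem a) _ (hmem b)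
  rintro _ ⟨x, hx, rfl⟩ _ ⟨y, hy, rfl⟩
  exact hXf x hx y hy

end

open Finset in
theorem Finset.exists_notMem_notMem_of_not_disjoint {α : Type*} [Fintype α] {s t : Finset α}
    (hst : ¬ Disjoint s t) (hcard : #s + #t ≤ Fintype.card α) : ∃ m, m ∉ s ∧ m ∉ t := by
  classical
  have hinter : 0 < #(s ∩ t) := card_pos.2 (not_disjoint_iff_nonempty_inter.1 hst)
  obtain ⟨m, -, hm⟩ := exists_mem_notMem_of_card_lt_card (s := s ∪ t) (t := univ)
    (by have := card_union_add_card_inter s t; rw [card_univ]; omega)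
  exact ⟨m, by simpa [not_or] using hm⟩

theorem Equiv.Perm.apply_notMem_of_disjoint {α : Type*} {σ : Equiv.Perm α} {s t : Finset α}
    (hst : _root_.Disjoint s t) (hσ : ∀ m ∉ t, σ m = m) {m : α} (hm : m ∉ s) : σ m ∉ s :=
  fun h ↦ hm (σ.injective (hσ _ (Finset.disjoint_left.1 hst h)) ▸ h)

theorem Pi.eq_mulSingle_prod_mul_prod_div {ι M : Type*} [Fintype ι] [DecidableEq ι]
    [CommGroup M] (u : ι → M) (L : ι) :
    u = Pi.mulSingle L (∏ i, u i) * ∏ a, (Pi.mulSingle a (u a) / Pi.mulSingle L (u a)) := by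
  have hL : ∏ a, Pi.mulSingle L (u a) = (Pi.mulSingle L (∏ i, u i) : ι → M) :=
    (map_prod (MonoidHom.mulSingle (fun _ ↦ M) L) u _).symm
  rw [Finset.prod_div_distrib, Finset.univ_prod_mulSingle, hL, mul_div_cancel]

section Monomial

variable {r : ℕ}

theorem monoMat_col_eq_one_col_iff {σ : Equiv.Perm (Fin r)} {c : Fin r → ℂ} {m : Fin r} :
    (∀ i, monoMat σ c i m = (1 : Matrix (Fin r) (Fin r) ℂ) i m) ↔ σ m = m ∧ c m = 1 := by
  constructor
  · intro h
    have hm := h m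
    by_cases hσm : m = σ m
    · simp only [monoMat, Matrix.of_apply, if_pos hσm, Matrix.one_apply_eq] at hm
      exact ⟨hσm.symm, hm⟩
    · simp [monoMat, hσm] at hm
  · rintro ⟨hσm, hcm⟩ i
    by_cases hi : i = m <;> simp [monoMat, Matrix.one_apply, hσm, hcm, hi]

theorem monoMat_commute_of_disjoint {σ τ : Equiv.Perm (Fin r)} {c b : Fin r → ℂ}
    {s t : Finset (Fin r)} (hst : Disjoint s t) (hσ : ∀ m ∉ s, σ m = m ∧ c m = 1)
    (hτ : ∀ m ∉ t, τ m = m ∧ b m = 1) : Commute (monoMat σ c) (monoMat τ b) := by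
  have hστ : Commute σ τ := Equiv.Perm.Disjoint.commute fun m ↦
    if hm : m ∈ s then .inr (hτ m (Finset.disjoint_left.1 hst hm)).1 else .inl (hσ m hm).1
  have hcoef : ∀ m, c (τ m) * b m = b (σ m) * c m := by
    intro m
    by_cases hm : m ∈ s
    · have hmt : m ∉ t := Finset.disjoint_left.1 hst hm
      have hσm : σ m ∉ t :=
        Equiv.Perm.apply_notMem_of_disjoint hst.symm (fun m hm ↦ (hσ m hm).1) hmt
      rw [(hτ m hmt).1, (hτ m hmt).2, (hτ _ hσm).2, mul_one, one_mul]
    · have hτm : τ m ∉ s :=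
        Equiv.Perm.apply_notMem_of_disjoint hst (fun m hm ↦ (hτ m hm).1) hm
      rw [(hσ m hm).1, (hσ m hm).2, (hσ _ hτm).2, mul_one, one_mul]
  rw [Commute, SemiconjBy, monoMat_mul, monoMat_mul, hστ.eq, funext hcoef]

theorem ne_zero_of_isUnit_monoMat {σ : Equiv.Perm (Fin r)} {c : Fin r → ℂ}
    (h : IsUnit (monoMat σ c)) (j : Fin r) : c j ≠ 0 := by
  obtain ⟨A, hA⟩ := h.exists_left_inv
  intro hcj
  have := congr_fun₂ hA j j
  simp [Matrix.mul_apply, monoMat, hcj] at this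

end Monomial

section MonomialUnits

variable {r : ℕ}

def monoUnit (σ : Equiv.Perm (Fin r)) (u : Fin r → ℂˣ) : GL (Fin r) ℂ where
  val := monoMat σ fun j ↦ u j
  inv := monoMat σ⁻¹ fun j ↦ ↑(u (σ⁻¹ j))⁻¹
  val_inv := by simp [monoMat_mul, ← Pi.one_def, monoMat_one]
  inv_val := by simp [monoMat_mul, ← Pi.one_def, monoMat_one]

theorem val_monoUnit (σ : Equiv.Perm (Fin r)) (u : Fin r → ℂˣ) :
    (monoUnit σ u : Matrix (Fin r) (Fin r) ℂ) = monoMat σ fun j ↦ u j := rfl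

theorem monoUnit_mul (σ τ : Equiv.Perm (Fin r)) (u v : Fin r → ℂˣ) :
    monoUnit σ u * monoUnit τ v = monoUnit (σ * τ) fun j ↦ u (τ j) * v j :=
  Units.ext <| by simp [val_monoUnit, monoMat_mul]

def permUnit : Equiv.Perm (Fin r) →* GL (Fin r) ℂ :=
  MonoidHom.mk' (monoUnit · 1) fun σ τ ↦ by rw [monoUnit_mul]; simp [Pi.one_def]

def diagUnit : (Fin r → ℂˣ) →* GL (Fin r) ℂ :=
  MonoidHom.mk' (monoUnit 1) fun u v ↦ by rw [monoUnit_mul]; rfl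

theorem monoUnit_eq_permUnit_mul_diagUnit (σ : Equiv.Perm (Fin r)) (u : Fin r → ℂˣ) :
    monoUnit σ u = permUnit σ * diagUnit u := by
  simp [permUnit, diagUnit, monoUnit_mul]

def FixesBasisVector (m : Fin r) (A : GL (Fin r) ℂ) : Prop :=
  ∀ i, (A : Matrix (Fin r) (Fin r) ℂ) i m = (1 : Matrix (Fin r) (Fin r) ℂ) i m

theorem fixesBasisVector_monoUnit_iff {σ : Equiv.Perm (Fin r)} {u : Fin r → ℂˣ} {m : Fin r} :
    FixesBasisVector m (monoUnit σ u) ↔ σ m = m ∧ u m = 1 := by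
  rw [FixesBasisVector, val_monoUnit, monoMat_col_eq_one_col_iff, Units.val_eq_one]

theorem monoUnit_mem_Gdeer {d e : ℕ} (σ : Equiv.Perm (Fin r)) {u : Fin r → ℂˣ}
    (hu : u ^ (d * e) = 1) (hprod : (∏ i, u i) ^ d = 1) : monoUnit σ u ∈ Gdeer d e r :=
  ⟨σ, _, fun i ↦ by simpa [← Units.val_pow_eq_pow_val] using congrFun hu i,
    by simp [← Units.coe_prod, ← Units.val_pow_eq_pow_val, hprod], rfl⟩

theorem exists_eq_monoUnit_of_mem_Gdeer {d e : ℕ} {g : GL (Fin r) ℂ} (hg : g ∈ Gdeer d e r) :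
    ∃ σ u, u ^ (d * e) = 1 ∧ (∏ i, u i) ^ d = 1 ∧ g = monoUnit σ u := by
  obtain ⟨σ, c, hc, hprod, hgc⟩ := hg
  have hc0 : ∀ j, c j ≠ 0 := ne_zero_of_isUnit_monoMat (hgc ▸ g.isUnit)
  refine ⟨σ, fun j ↦ .mk0 (c j) (hc0 j), funext fun i ↦ Units.ext (by simpa using hc i),
    Units.ext (by simpa using hprod), Units.ext hgc⟩

end MonomialUnits

section Gdeer

variable {d e r : ℕ}

def permGdeer : Equiv.Perm (Fin r) →* Gdeer d e r :=
  permUnit.codRestrict _ fun σ ↦ monoUnit_mem_Gdeer σ (one_pow _) (by simp)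

theorem fixesBasisVector_conj_permGdeer (π : Equiv.Perm (Fin r)) {g : Gdeer d e r} {m : Fin r}
    (hg : FixesBasisVector m g) :
    FixesBasisVector (π m) (permGdeer π * g * (permGdeer π)⁻¹ : Gdeer d e r) := by
  obtain ⟨σ, u, -, -, hgu⟩ := exists_eq_monoUnit_of_mem_Gdeer g.2
  have hπ : ((permGdeer π : Gdeer d e r) : GL (Fin r) ℂ) = monoUnit π 1 := rfl
  have hπinv : (((permGdeer π)⁻¹ : Gdeer d e r) : GL (Fin r) ℂ) = monoUnit π⁻¹ 1 := by
    rw [← map_inv]; rfl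
  rw [Subgroup.coe_mul, Subgroup.coe_mul, hπ, hπinv, hgu, monoUnit_mul, monoUnit_mul,
    fixesBasisVector_monoUnit_iff]
  rw [hgu, fixesBasisVector_monoUnit_iff] at hg
  simp [hg]

theorem fixesLastVectors_one_of_fixesBasisVector {g : GL (Fin r) ℂ} (hr : 0 < r)
    (hg : FixesBasisVector ⟨r - 1, by omega⟩ g) : FixesLastVectors 1 g := by
  intro j hj
  rwa [show j = ⟨r - 1, by omega⟩ from Fin.ext (by have := j.isLt; simp only; omega)]

theorem commute_map_of_fixesBasisVector {Q : Type*} [Group Q] (p : Gdeer d e r →* Q)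
    (hcomm : ∀ a b : Gdeer d e r, FixesLastVectors 1 (a : GL (Fin r) ℂ) →
      FixesLastVectors 1 (b : GL (Fin r) ℂ) → p a * p b = p b * p a)
    {m : Fin r} {a b : Gdeer d e r} (ha : FixesBasisVector m a) (hb : FixesBasisVector m b) :
    Commute (p a) (p b) := by
  have hr : 0 < r := m.pos
  set t : Gdeer d e r := permGdeer (Equiv.swap m ⟨r - 1, by omega⟩)
  have hfix : ∀ x : Gdeer d e r, FixesBasisVector m x →
      FixesLastVectors 1 ((t * x * t⁻¹ : Gdeer d e r) : GL (Fin r) ℂ) := fun x hx ↦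
    fixesLastVectors_one_of_fixesBasisVector hr
      (by simpa using fixesBasisVector_conj_permGdeer (Equiv.swap m ⟨r - 1, by omega⟩) hx)
  have hconj := hcomm _ _ (hfix a ha) (hfix b hb)
  simp only [map_mul, map_inv] at hconj
  exact (Commute.conj_iff (p t)).1 hconj

theorem commute_of_disjoint {g h : Gdeer d e r} {s t : Finset (Fin r)} (hst : Disjoint s t)
    (hg : ∀ m ∉ s, FixesBasisVector m g) (hh : ∀ m ∉ t, FixesBasisVector m h) :
    Commute g h := by
  obtain ⟨σ, u, -, -, hgu⟩ := exists_eq_monoUnit_of_mem_Gdeer g.2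
  obtain ⟨τ, v, -, -, hhv⟩ := exists_eq_monoUnit_of_mem_Gdeer h.2
  simp only [hgu, hhv, fixesBasisVector_monoUnit_iff] at hg hh
  have := monoMat_commute_of_disjoint hst (c := fun j ↦ u j) (b := fun j ↦ v j)
    (fun m hm ↦ ⟨(hg m hm).1, by simp [(hg m hm).2]⟩)
    (fun m hm ↦ ⟨(hh m hm).1, by simp [(hh m hm).2]⟩)
  exact Subtype.ext <| Units.ext <| by simpa [hgu, hhv, val_monoUnit] using this.eq

def movesAtMostTwo (d e r : ℕ) : Set (Gdeer d e r) :=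
  {g | ∃ s : Finset (Fin r), s.card ≤ 2 ∧ ∀ m ∉ s, FixesBasisVector m g}

theorem mem_closure_movesAtMostTwo {g : GL (Fin r) ℂ} (hg : g ∈ Gdeer d e r)
    {s : Finset (Fin r)} (hs : s.card ≤ 2) (hfix : ∀ m ∉ s, FixesBasisVector m g) :
    g ∈ Subgroup.closure ((Gdeer d e r).subtype '' movesAtMostTwo d e r) :=
  Subgroup.subset_closure ⟨⟨g, hg⟩, ⟨s, hs, hfix⟩, rfl⟩

theorem permUnit_mem_closure_movesAtMostTwo (σ : Equiv.Perm (Fin r)) :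
    permUnit σ ∈ Subgroup.closure ((Gdeer d e r).subtype '' movesAtMostTwo d e r) := by
  have hswaps : (Subgroup.closure {τ : Equiv.Perm (Fin r) | τ.IsSwap}).map permUnit ≤
      Subgroup.closure ((Gdeer d e r).subtype '' movesAtMostTwo d e r) := by
    rw [MonoidHom.map_closure, Subgroup.closure_le]
    rintro _ ⟨_, ⟨x, y, -, rfl⟩, rfl⟩
    refine mem_closure_movesAtMostTwo (s := {x, y}) (permGdeer (Equiv.swap x y)).2
      Finset.card_le_two fun m hm ↦ fixesBasisVector_monoUnit_iff.2 ⟨?_, rfl⟩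
    simp only [Finset.mem_insert, Finset.mem_singleton, not_or] at hm
    exact Equiv.swap_apply_of_ne_of_ne hm.1 hm.2
  rw [Equiv.Perm.closure_isSwap] at hswaps
  exact hswaps (Subgroup.mem_map_of_mem _ (Subgroup.mem_top σ))

theorem diagUnit_mem_closure_movesAtMostTwo {u : Fin r → ℂˣ} (hu : u ^ (d * e) = 1)
    (hprod : (∏ i, u i) ^ d = 1) :
    diagUnit u ∈ Subgroup.closure ((Gdeer d e r).subtype '' movesAtMostTwo d e r) := by
  rcases isEmpty_or_nonempty (Fin r) with _ | ⟨⟨L⟩⟩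
  · rw [Subsingleton.elim u 1, map_one]
    exact one_mem _
  have hsingle : (Pi.mulSingle L (∏ i, u i) : Fin r → ℂˣ) ^ (d * e) = 1 := by
    rw [← Pi.mulSingle_pow, pow_mul, hprod, one_pow, Pi.mulSingle_one]
  have hpair : ∀ a,
      (Pi.mulSingle a (u a) / Pi.mulSingle L (u a) : Fin r → ℂˣ) ^ (d * e) = 1 := fun a ↦ by
    have hua : u a ^ (d * e) = 1 := by simpa using congrFun hu a
    rw [div_pow, ← Pi.mulSingle_pow, ← Pi.mulSingle_pow, hua, Pi.mulSingle_one,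
      Pi.mulSingle_one, div_one]
  have hpair_prod : ∀ a,
      ∏ i, (Pi.mulSingle a (u a) / Pi.mulSingle L (u a) : Fin r → ℂˣ) i = 1 := fun a ↦ by
    simp only [Pi.div_apply, Finset.prod_div_distrib, Fintype.prod_pi_mulSingle', div_self']
  suffices u ∈ (Subgroup.closure ((Gdeer d e r).subtype '' movesAtMostTwo d e r)).comap diagUnit
    from this
  rw [Pi.eq_mulSingle_prod_mul_prod_div u L]
  refine mul_mem ?_ (Subgroup.prod_mem _ fun a _ ↦ ?_)
  · refine mem_closure_movesAtMostTwo (s := {L}) (monoUnit_mem_Gdeer 1 hsingle ?_)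
      (Finset.card_singleton L ▸ one_le_two)
      fun m hm ↦ fixesBasisVector_monoUnit_iff.2 ⟨rfl, ?_⟩
    · rw [Fintype.prod_pi_mulSingle', hprod]
    · exact Pi.mulSingle_eq_of_ne (Finset.notMem_singleton.1 hm) _
  · refine mem_closure_movesAtMostTwo (s := {a, L}) (monoUnit_mem_Gdeer 1 (hpair a) ?_)
      Finset.card_le_two fun m hm ↦ fixesBasisVector_monoUnit_iff.2 ⟨rfl, ?_⟩
    · rw [hpair_prod, one_pow]
    · simp only [Finset.mem_insert, Finset.mem_singleton, not_or] at hm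
      simp [Pi.mulSingle_eq_of_ne hm.1, Pi.mulSingle_eq_of_ne hm.2]

theorem closure_movesAtMostTwo : Subgroup.closure (movesAtMostTwo d e r) = ⊤ := by
  apply Subgroup.map_injective (Gdeer d e r).subtype_injective
  rw [MonoidHom.map_closure, ← MonoidHom.range_eq_map, Subgroup.range_subtype]
  refine le_antisymm ((Subgroup.closure_le _).2 ?_) fun g hg ↦ ?_
  · rintro _ ⟨g, -, rfl⟩
    exact g.2
  obtain ⟨σ, u, hu, hprod, rfl⟩ := exists_eq_monoUnit_of_mem_Gdeer hg
  rw [monoUnit_eq_permUnit_mul_diagUnit]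
  exact mul_mem (permUnit_mem_closure_movesAtMostTwo σ)
    (diagUnit_mem_closure_movesAtMostTwo hu hprod)

end Gdeer

theorem image_commutative_of_image_commutative_on_sub_general (d e r : ℕ)
    (hr : 4 ≤ r)
    (Q : Type*) [Group Q] (p : Gdeer d e r →* Q)
    (hcomm : ∀ a b : Gdeer d e r, FixesLastVectors 1 (a : GL (Fin r) ℂ) →
      FixesLastVectors 1 (b : GL (Fin r) ℂ) → p a * p b = p b * p a) :
    ∀ a b : Gdeer d e r, p a * p b = p b * p a := by
  refine commute_map_of_closure_eq_top closure_movesAtMostTwo p ?_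
  rintro x ⟨s, hs, hx⟩ y ⟨t, ht, hy⟩
  by_cases hst : Disjoint s t
  · exact (commute_of_disjoint hst hx hy).map p
  obtain ⟨m, hms, hmt⟩ :=
    Finset.exists_notMem_notMem_of_not_disjoint hst (by rw [Fintype.card_fin]; omega)
  exact commute_map_of_fixesBasisVector p hcomm (hx m hms) (hy m hmt)

/-- If `r ≥ 4` and `p : G(de,e,r) → Q` is a group homomorphism whose image of the
standardly embedded subgroup `G(de,e,r-1)` is commutative, then the image of the whole
group `G(de,e,r)` is commutative. -/
theorem image_commutative_of_image_commutative_on_sub (d e r : ℕ)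
    (hd : 1 ≤ d) (he : 1 ≤ e) (hr : 4 ≤ r)
    (Q : Type*) [Group Q] (p : Gdeer d e r →* Q)
    (hcomm : ∀ a b : Gdeer d e r, FixesLastVectors 1 (a : GL (Fin r) ℂ) →
      FixesLastVectors 1 (b : GL (Fin r) ℂ) → p a * p b = p b * p a) :
    ∀ a b : Gdeer d e r, p a * p b = p b * p a :=
  image_commutative_of_image_commutative_on_sub_general d e r hr Q p hcomm
end
end

section
/- Let d, e ≥ 1 and r ≥ 2. If ρ is an irreducible finite-dimensional complex representation of G(de,e,r+1) with dim ρ > 1, then the restriction of ρ to the subgroup G(de,e,r−1) (embedded as the subgroup fixing the last two standard basis vectors) is not irreducible. -/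
/-! If the restriction of `ρ` to the stabiliser `H` of the last two basis vectors were
irreducible, Schur's lemma would make every element commuting with `H` act by a scalar; this
includes every element of `G(de,e,r+1)` supported on the last two coordinates, and, after
conjugating by permutation matrices, every element supported on any two coordinates. Such
elements generate the group (an element is a permutation matrix times a diagonal one, and a
diagonal one is a product of diagonal matrices supported on pairs), so all of `ρ` would act by
scalars, and an irreducible representation by scalars is one-dimensional. -/

noncomputable section

open Matrix

theorem Module.End.exists_eq_algebraMap_of_forall_commute {K V ι : Type*} [Field K]
    [IsAlgClosed K] [AddCommGroup V] [Module K V] [FiniteDimensional K V] [Nontrivial V]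
    (g : ι → Module.End K V)
    (hirr : ∀ p : Submodule K V, (∀ i, ∀ v ∈ p, g i v ∈ p) → p = ⊥ ∨ p = ⊤)
    {f : Module.End K V} (hf : ∀ i, Commute f (g i)) : ∃ μ, f = algebraMap K _ μ := by
  obtain ⟨μ, hμ⟩ := f.exists_eigenvalue
  refine ⟨μ, ?_⟩
  rcases hirr (f.eigenspace μ)
    (fun i => Module.End.mapsTo_genEigenspace_of_comm (hf i) μ 1) with h | h
  · exact absurd h hμ
  · ext v
    have hv : v ∈ f.eigenspace μ := h ▸ Submodule.mem_top
    simpa using Module.End.mem_eigenspace_iff.mp hv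

namespace Representation

section

variable {k G V : Type*} [CommSemiring k] [Group G] [AddCommMonoid V] [Module k V]
  (ρ : Representation k G V)

def scalarSubmonoid : Submonoid G :=
  (MonoidHom.mrange (algebraMap k (Module.End k V))).comap ρ

lemma conj_mem_scalarSubmonoid {t : G} (ht : t ∈ ρ.scalarSubmonoid) (g : G) :
    g * t * g⁻¹ ∈ ρ.scalarSubmonoid := by
  obtain ⟨μ, hμ⟩ := ht
  refine ⟨μ, ?_⟩
  rw [map_mul, map_mul, ← hμ, ← Algebra.commutes, mul_assoc, ← map_mul, mul_inv_cancel,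
    map_one, mul_one]

end

lemma finrank_le_one_of_scalarSubmonoid_eq_top {k G V : Type*} [Field k] [Group G]
    [AddCommGroup V] [Module k V] (ρ : Representation k G V)
    (hirr : ∀ p : Submodule k V, (∀ g, ∀ v ∈ p, ρ g v ∈ p) → p = ⊥ ∨ p = ⊤)
    (hscal : ρ.scalarSubmonoid = ⊤) : Module.finrank k V ≤ 1 := by
  rcases subsingleton_or_nontrivial V with hV | hV
  · simp [Module.finrank_zero_of_subsingleton]
  obtain ⟨v, hv⟩ := exists_ne (0 : V)
  have hinv : ∀ g, ∀ w ∈ k ∙ v, ρ g w ∈ k ∙ v := fun g w hw => by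
    obtain ⟨μ, hμ⟩ := hscal ▸ Submonoid.mem_top g
    rw [← hμ, Module.algebraMap_end_apply]
    exact Submodule.smul_mem _ μ hw
  rcases hirr _ hinv with h | h
  · exact absurd (Submodule.span_singleton_eq_bot.mp h) hv
  · rw [← finrank_top, ← h, finrank_span_singleton hv]

end Representation

lemma Equiv.Perm.apply_mem_of_forall_notMem {α : Type*} {s : Set α} {σ : Equiv.Perm α}
    (h : ∀ k ∉ s, σ k = k) {k : α} (hk : k ∈ s) : σ k ∈ s := by
  by_contra hσk
  exact hσk (by rwa [σ.injective (h _ hσk)])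

lemma Equiv.Perm.exists_image_pair_subset {α : Type*} [DecidableEq α] {a₀ b₀ : α}
    (h : a₀ ≠ b₀) (a b : α) : ∃ π : Equiv.Perm α, π '' {a, b} ⊆ {a₀, b₀} := by
  refine ⟨Equiv.swap (Equiv.swap a a₀ b) b₀ * Equiv.swap a a₀, ?_⟩
  have hb : (Equiv.swap (Equiv.swap a a₀ b) b₀ * Equiv.swap a a₀) b = b₀ :=
    Equiv.swap_apply_left _ _
  rw [Set.image_pair, Set.pair_subset_iff]
  refine ⟨?_, by simp [hb]⟩
  by_cases hab : a = b
  · simp [hab]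
  · left
    rw [Equiv.Perm.mul_apply, Equiv.swap_apply_left]
    refine Equiv.swap_apply_of_ne_of_ne (fun h' => hab ?_) h
    exact (Equiv.swap a a₀).injective ((Equiv.swap_apply_left a a₀).trans h')

def monoGL {n : ℕ} (σ : Equiv.Perm (Fin n)) (c : Fin n → ℂˣ) : GL (Fin n) ℂ where
  val := monoMat σ fun j => c j
  inv := monoMat σ⁻¹ fun j => ↑(c (σ⁻¹ j))⁻¹
  val_inv := by
    rw [monoMat_mul, mul_inv_cancel]
    simpa [Pi.one_def] using monoMat_one
  inv_val := by
    rw [monoMat_mul, inv_mul_cancel]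
    simpa [Pi.one_def] using monoMat_one

lemma monoGL_mul {n : ℕ} (σ τ : Equiv.Perm (Fin n)) (c b : Fin n → ℂˣ) :
    monoGL σ c * monoGL τ b = monoGL (σ * τ) fun j => c (τ j) * b j :=
  Units.ext <| by simp [monoGL, monoMat_mul]

lemma monoGL_one {n : ℕ} : monoGL (1 : Equiv.Perm (Fin n)) 1 = 1 :=
  Units.ext <| by simpa [monoGL, Pi.one_def] using monoMat_one

def IsMonoSupportedOn {n : ℕ} (s : Set (Fin n)) (A : GL (Fin n) ℂ) : Prop :=
  ∃ σ c, (A : Matrix (Fin n) (Fin n) ℂ) = monoMat σ c ∧ ∀ k ∉ s, σ k = k ∧ c k = 1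

namespace IsMonoSupportedOn

variable {n : ℕ} {s t : Set (Fin n)} {A B : GL (Fin n) ℂ}

lemma mono (hA : IsMonoSupportedOn s A) (hst : s ⊆ t) : IsMonoSupportedOn t A := by
  obtain ⟨σ, c, hA, h⟩ := hA
  exact ⟨σ, c, hA, fun k hk => h k fun hks => hk (hst hks)⟩

lemma commute (hA : IsMonoSupportedOn s A) (hB : IsMonoSupportedOn sᶜ B) : Commute A B := by
  obtain ⟨σ, c, hA, hσc⟩ := hA
  obtain ⟨τ, b, hB, hτb⟩ := hB
  have key : ∀ j, σ (τ j) = τ (σ j) ∧ c (τ j) * b j = b (σ j) * c j := by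
    intro j
    by_cases hj : j ∈ s
    · have hσj := Equiv.Perm.apply_mem_of_forall_notMem (fun k hk => (hσc k hk).1) hj
      obtain ⟨hτ, hb⟩ := hτb j (not_not_intro hj)
      obtain ⟨hτσ, hbσ⟩ := hτb (σ j) (not_not_intro hσj)
      simp [hτ, hb, hτσ, hbσ]
    · have hτj := Equiv.Perm.apply_mem_of_forall_notMem (s := sᶜ) (fun k hk => (hτb k hk).1) hj
      obtain ⟨hσ, hc⟩ := hσc j hj
      obtain ⟨hστ, hcτ⟩ := hσc (τ j) hτj
      simp [hσ, hc, hστ, hcτ]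
  refine Units.ext ?_
  rw [Units.val_mul, Units.val_mul, hA, hB, monoMat_mul, monoMat_mul]
  congr 1
  · exact Equiv.ext fun j => (key j).1
  · exact funext fun j => (key j).2

lemma conj (hA : IsMonoSupportedOn s A) (π : Equiv.Perm (Fin n)) :
    IsMonoSupportedOn (π '' s) (monoGL π 1 * A * (monoGL π 1)⁻¹) := by
  obtain ⟨σ, c, hA, h⟩ := hA
  refine ⟨π * σ * π⁻¹, fun j => c (π⁻¹ j), ?_, fun k hk => ?_⟩
  · change monoMat π _ * (A : Matrix (Fin n) (Fin n) ℂ) * monoMat π⁻¹ _ = _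
    simp [hA, monoMat_mul]
  obtain ⟨hσ, hc⟩ := h (π.symm k) fun hs => hk ⟨_, hs, π.apply_symm_apply k⟩
  simp [Equiv.Perm.mul_apply, hσ, hc]

end IsMonoSupportedOn

namespace Gdeer

variable {d e n : ℕ}

lemma monoGL_mem (σ : Equiv.Perm (Fin n)) {c : Fin n → ℂˣ} (hc : c ^ (d * e) = 1)
    (hprod : (∏ i, c i) ^ d = 1) : monoGL σ c ∈ Gdeer d e n := by
  refine ⟨σ, fun j => c j, fun i => ?_, ?_, rfl⟩
  · rw [← Units.val_pow_eq_pow_val, ← Pi.pow_apply, hc, Pi.one_apply, Units.val_one]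
  · rw [← Units.coe_prod, ← Units.val_pow_eq_pow_val, hprod, Units.val_one]

def permHom : Equiv.Perm (Fin n) →* Gdeer d e n where
  toFun σ := ⟨monoGL σ 1, monoGL_mem σ (one_pow _) (by simp)⟩
  map_one' := Subtype.ext monoGL_one
  map_mul' σ τ := Subtype.ext <| by
    change monoGL (σ * τ) 1 = monoGL σ 1 * monoGL τ 1
    simp [monoGL_mul, Pi.one_def]

def diagCoeffs (d e n : ℕ) : Subgroup (Fin n → ℂˣ) where
  carrier := {c | c ^ (d * e) = 1 ∧ (∏ i, c i) ^ d = 1}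
  one_mem' := ⟨one_pow _, by simp⟩
  mul_mem' := by
    rintro a b ⟨ha, hpa⟩ ⟨hb, hpb⟩
    exact ⟨by rw [mul_pow, ha, hb, one_mul],
      by rw [Pi.mul_def, Finset.prod_mul_distrib, mul_pow, hpa, hpb, one_mul]⟩
  inv_mem' := by
    rintro a ⟨ha, hpa⟩
    exact ⟨by rw [inv_pow, ha, inv_one],
      by rw [Pi.inv_def, Finset.prod_inv_distrib, inv_pow, hpa, inv_one]⟩

def diagHom : diagCoeffs d e n →* Gdeer d e n where
  toFun c := ⟨monoGL 1 c, monoGL_mem 1 c.2.1 c.2.2⟩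
  map_one' := Subtype.ext monoGL_one
  map_mul' a b := Subtype.ext <| by
    change monoGL 1 (a * b : Fin n → ℂˣ) = monoGL 1 a * monoGL 1 b
    rw [monoGL_mul]
    rfl

lemma exists_eq_permHom_mul_diagHom (t : Gdeer d e n) :
    ∃ σ c, t = permHom σ * diagHom c := by
  obtain ⟨σ, c, hpow, hprod, ht⟩ := t.2
  have hc : ∀ j, c j ≠ 0 := fun j hj => by
    have hdet := (Matrix.GeneralLinearGroup.det (t : GL (Fin n) ℂ)).ne_zero
    rw [Matrix.GeneralLinearGroup.val_det_apply, ht] at hdet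
    exact hdet (Matrix.det_eq_zero_of_column_eq_zero j fun i => by simp [monoMat, hj])
  let cu : Fin n → ℂˣ := fun j => Units.mk0 (c j) (hc j)
  have hcu : cu ∈ diagCoeffs d e n :=
    ⟨funext fun i => Units.ext <| by simp [cu, hpow],
      Units.ext <| by simp [cu, hprod]⟩
  refine ⟨σ, ⟨cu, hcu⟩, Subtype.ext <| Units.ext ?_⟩
  simp [permHom, diagHom, monoGL, monoMat_mul, ht, cu]

lemma isMonoSupportedOn_of_fixesLastVectors {k : ℕ} {w : Gdeer d e n}
    (hw : FixesLastVectors k (w : GL (Fin n) ℂ)) :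
    IsMonoSupportedOn {j | (j : ℕ) < n - k} (w : GL (Fin n) ℂ) := by
  obtain ⟨σ, c, -, -, hwσ⟩ := w.2
  refine ⟨σ, c, hwσ, fun j hj => ?_⟩
  have hjj := hw j (not_lt.mp hj) j
  rw [hwσ] at hjj
  simp only [monoMat, Matrix.of_apply, Matrix.one_apply_eq] at hjj
  split_ifs at hjj with hσj
  · exact ⟨hσj.symm, hjj⟩
  · exact absurd hjj zero_ne_one

lemma isMonoSupportedOn_diagHom {s : Set (Fin n)} (c : diagCoeffs d e n)
    (h : ∀ k ∉ s, (c : Fin n → ℂˣ) k = 1) : IsMonoSupportedOn s (diagHom c : GL (Fin n) ℂ) :=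
  ⟨1, fun j => (c : Fin n → ℂˣ) j, rfl, fun k hk => ⟨rfl, by simp [h k hk]⟩⟩

lemma mulSingle_mul_mulSingle_inv_mem (i j : Fin n) {x : ℂˣ} (hx : x ^ (d * e) = 1) :
    Pi.mulSingle i x * Pi.mulSingle j x⁻¹ ∈ diagCoeffs d e n := by
  refine ⟨?_, ?_⟩
  · rw [mul_pow, ← Pi.mulSingle_pow, ← Pi.mulSingle_pow, inv_pow, hx, inv_one,
      Pi.mulSingle_one, Pi.mulSingle_one, one_mul]
  · simp [Finset.prod_mul_distrib, Finset.prod_pi_mulSingle']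

def pairSupported (d e n : ℕ) : Set (Gdeer d e n) :=
  {t | ∃ a b, IsMonoSupportedOn {a, b} (t : GL (Fin n) ℂ)}

lemma permHom_mem_closure (σ : Equiv.Perm (Fin n)) :
    permHom σ ∈ Submonoid.closure (pairSupported d e n) := by
  induction σ using Equiv.Perm.swap_induction_on with
  | one => rw [map_one]; exact Submonoid.one_mem _
  | swap_mul f x y _ hf =>
    rw [map_mul]
    refine Submonoid.mul_mem _ (Submonoid.subset_closure
      ⟨x, y, Equiv.swap x y, fun _ => 1, rfl, fun k hk => ?_⟩) hf
    simp only [Set.mem_insert_iff, Set.mem_singleton_iff, not_or] at hk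
    exact ⟨Equiv.swap_apply_of_ne_of_ne hk.1 hk.2, rfl⟩

lemma diagHom_mem_closure (c : diagCoeffs d e n) :
    diagHom c ∈ Submonoid.closure (pairSupported d e n) := by
  rcases isEmpty_or_nonempty (Fin n) with _ | ⟨⟨L⟩⟩
  · rw [Subsingleton.elim c 1, map_one]
    exact Submonoid.one_mem _
  suffices ∀ (s : Finset (Fin n)) (c : diagCoeffs d e n),
      (∀ k ∉ s, k ≠ L → (c : Fin n → ℂˣ) k = 1) →
      diagHom c ∈ Submonoid.closure (pairSupported d e n) from
    this Finset.univ c (by simp)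
  intro s
  induction s using Finset.induction_on with
  | empty =>
    intro c hc
    refine Submonoid.subset_closure ⟨L, L, isMonoSupportedOn_diagHom c fun k hk => ?_⟩
    exact hc k (Finset.notMem_empty k) (by simpa using hk)
  | insert i s _ ih =>
    intro c hc
    -- `p` moves the entry of `c` at `i` to `L`, so that `p⁻¹ * c` is trivial at `i`
    let p : diagCoeffs d e n := ⟨_, mulSingle_mul_mulSingle_inv_mem i L (congrFun c.2.1 i)⟩
    have hsplit : diagHom c = diagHom p * diagHom (p⁻¹ * c) := by
      rw [← map_mul, mul_inv_cancel_left]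
    rw [hsplit]
    refine Submonoid.mul_mem _ (Submonoid.subset_closure
      ⟨i, L, isMonoSupportedOn_diagHom p fun k hk => ?_⟩) (ih _ fun k hk hkL => ?_)
    · simp only [Set.mem_insert_iff, Set.mem_singleton_iff, not_or] at hk
      simp [p, hk.1, hk.2]
    · by_cases hki : k = i
      · subst hki
        simp [p, hkL]
      · simp [p, hki, hkL, hc k (by simp [hki, hk]) hkL]

theorem closure_pairSupported : Submonoid.closure (pairSupported d e n) = ⊤ := by
  refine eq_top_iff.mpr fun t _ => ?_
  obtain ⟨σ, c, rfl⟩ := exists_eq_permHom_mul_diagHom t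
  exact Submonoid.mul_mem _ (permHom_mem_closure σ) (diagHom_mem_closure c)

theorem scalarSubmonoid_eq_top_of_irreducible_restriction {k : ℕ} (hk : 2 ≤ k) (hn : 2 ≤ n)
    {U : Type*} [AddCommGroup U] [Module ℂ U] [FiniteDimensional ℂ U] [Nontrivial U]
    (ρ : Representation ℂ (Gdeer d e n) U)
    (hres : ∀ p : Submodule ℂ U, (∀ w : Gdeer d e n, FixesLastVectors k (w : GL (Fin n) ℂ) →
      ∀ v ∈ p, ρ w v ∈ p) → p = ⊥ ∨ p = ⊤) :
    ρ.scalarSubmonoid = ⊤ := by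
  set T : Set (Fin n) := {j | (j : ℕ) < n - k}
  have hscal : ∀ t : Gdeer d e n, IsMonoSupportedOn Tᶜ (t : GL (Fin n) ℂ) →
      t ∈ ρ.scalarSubmonoid := by
    intro t ht
    obtain ⟨μ, hμ⟩ := Module.End.exists_eq_algebraMap_of_forall_commute
      (fun w : {w : Gdeer d e n // FixesLastVectors k (w : GL (Fin n) ℂ)} => ρ w)
      (fun p hp => hres p fun w hw => hp ⟨w, hw⟩) (f := ρ t)
      (fun w => Commute.map (Subtype.ext
        ((isMonoSupportedOn_of_fixesLastVectors w.2).commute ht).symm.eq) ρ)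
    exact ⟨μ, hμ.symm⟩
  have hpair : (⟨n - 2, by omega⟩ : Fin n) ≠ ⟨n - 1, by omega⟩ := by
    simp only [ne_eq, Fin.mk.injEq]
    omega
  have hpairT : ({⟨n - 2, by omega⟩, ⟨n - 1, by omega⟩} : Set (Fin n)) ⊆ Tᶜ := by
    simp only [Set.pair_subset_iff, Set.mem_compl_iff, Set.mem_ofPred_eq, T]
    omega
  rw [eq_top_iff, ← closure_pairSupported, Submonoid.closure_le]
  rintro t ⟨a, b, hab⟩
  obtain ⟨π, hπ⟩ := Equiv.Perm.exists_image_pair_subset hpair a b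
  have hconj := hscal (permHom π * t * (permHom π)⁻¹) ((hab.conj π).mono (hπ.trans hpairT))
  simpa [mul_assoc] using ρ.conj_mem_scalarSubmonoid hconj (permHom π)⁻¹

end Gdeer

theorem restriction_to_sub_not_irreducible_general (d e r : ℕ)
    (hr : 2 ≤ r)
    (U : Type*) [AddCommGroup U] [Module ℂ U] [FiniteDimensional ℂ U]
    (ρ : Representation ℂ (Gdeer d e (r + 1)) U)
    (hirr : ∀ p : Submodule ℂ U,
      (∀ w : Gdeer d e (r + 1), ∀ v ∈ p, ρ w v ∈ p) → p = ⊥ ∨ p = ⊤)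
    (hdim : 1 < Module.finrank ℂ U) :
    ∃ p : Submodule ℂ U,
      (∀ w : Gdeer d e (r + 1), FixesLastVectors 2 (w : GL (Fin (r + 1)) ℂ) →
        ∀ v ∈ p, ρ w v ∈ p) ∧
      p ≠ ⊥ ∧ p ≠ ⊤ := by
  by_contra! hres
  have : Nontrivial U := Module.nontrivial_of_finrank_pos (R := ℂ) (by omega)
  have hscal := Gdeer.scalarSubmonoid_eq_top_of_irreducible_restriction le_rfl (by omega) ρ
    fun p hp => or_iff_not_imp_left.mpr (hres p hp)
  exact absurd (ρ.finrank_le_one_of_scalarSubmonoid_eq_top hirr hscal) (not_le.mpr hdim)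

/-- If `ρ` is an irreducible complex representation of `G(de,e,r+1)` of dimension `> 1`
(with `r ≥ 2`), then its restriction to the standardly embedded subgroup `G(de,e,r-1)`
(the elements fixing the last two standard basis vectors) is not irreducible: there is
an invariant subspace distinct from `0` and the whole space. -/
theorem restriction_to_sub_not_irreducible (d e r : ℕ)
    (hd : 1 ≤ d) (he : 1 ≤ e) (hr : 2 ≤ r)
    (U : Type*) [AddCommGroup U] [Module ℂ U] [FiniteDimensional ℂ U]
    (ρ : Representation ℂ (Gdeer d e (r + 1)) U)
    (hirr : ∀ p : Submodule ℂ U,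
      (∀ w : Gdeer d e (r + 1), ∀ v ∈ p, ρ w v ∈ p) → p = ⊥ ∨ p = ⊤)
    (hdim : 1 < Module.finrank ℂ U) :
    ∃ p : Submodule ℂ U,
      (∀ w : Gdeer d e (r + 1), FixesLastVectors 2 (w : GL (Fin (r + 1)) ℂ) →
        ∀ v ∈ p, ρ w v ∈ p) ∧
      p ≠ ⊥ ∧ p ≠ ⊤ :=
  restriction_to_sub_not_irreducible_general d e r hr U ρ hirr hdim
end
end

section
/- For n ≥ 1 and z : Fin n → ℂ, let J(z) be the n×n complex matrix with entries J(z)_{k,j} = k·z(j)^{k−1} for 1 ≤ k ≤ n (rows indexed by k, columns by j), i.e. the Jacobian matrix at z of the power-sum map f = (f_1,…,f_n), f_k(z) = Σ_j z(j)^k. Then: (a) J(z) is invertible if and only if z is injective; and (b) for every permutation σ ∈ S_n and every v : Fin n → ℂ one has J(σ·z)(σ·v) = J(z)(v), where (σ·z)(i) = z(σ⁻¹(i)). Hence z ↦ J(z) is a holomorphic equivariant trivialization of the quotient of the trivial bundle X_n × ℂ^n over the configuration space X_n = {z | z injective}. -/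
/-!
`J(z) = diag(1, …, n) · V(z)ᵀ` with `V(z)` the Vandermonde matrix of `z`, so `det J(z)` is
`n!` times the Vandermonde determinant, which vanishes exactly when two points coincide.
Permuting the points permutes the columns of `J(z)`, which the same permutation of `v` undoes.
-/

open Matrix

/-- The matrix with entries `J(z)_{k,j} = k·z(j)^(k-1)` for `1 ≤ k ≤ n` (row index
`k : Fin n` corresponding to the exponent `k+1`), i.e. the Jacobian matrix at `z` of the
power-sum map `f = (f_1, …, f_n)`, `f_k(z) = Σ_j z(j)^k`. -/
def powerSumJacobian (n : ℕ) (z : Fin n → ℂ) : Matrix (Fin n) (Fin n) ℂ :=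
  Matrix.of fun k j => (((k : ℕ) + 1 : ℕ) : ℂ) * z j ^ (k : ℕ)

theorem powerSumJacobian_eq_diagonal_mul_vandermonde_transpose (n : ℕ) (z : Fin n → ℂ) :
    powerSumJacobian n z =
      diagonal (fun k : Fin n => (((k : ℕ) + 1 : ℕ) : ℂ)) * (vandermonde z)ᵀ := by
  ext k j
  simp [powerSumJacobian, diagonal_mul, vandermonde_apply]

theorem isUnit_powerSumJacobian_iff (n : ℕ) (z : Fin n → ℂ) :
    IsUnit (powerSumJacobian n z) ↔ Function.Injective z := by
  have hdiag : IsUnit (det (diagonal fun k : Fin n => (((k : ℕ) + 1 : ℕ) : ℂ))) := by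
    rw [det_diagonal, isUnit_iff_ne_zero]
    exact Finset.prod_ne_zero_iff.2 fun k _ => Nat.cast_ne_zero.2 (Nat.succ_ne_zero _)
  rw [isUnit_iff_isUnit_det, powerSumJacobian_eq_diagonal_mul_vandermonde_transpose, det_mul,
    IsUnit.mul_iff, det_transpose, and_iff_right hdiag, isUnit_iff_ne_zero,
    det_vandermonde_ne_zero_iff]

theorem powerSumJacobian_comp (n : ℕ) (z : Fin n → ℂ) (e : Fin n → Fin n) :
    powerSumJacobian n (z ∘ e) = (powerSumJacobian n z).submatrix id e :=
  rfl

theorem powerSumJacobian_comp_perm_mulVec (n : ℕ) (σ : Equiv.Perm (Fin n)) (z v : Fin n → ℂ) :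
    powerSumJacobian n (z ∘ σ) *ᵥ (v ∘ σ) = powerSumJacobian n z *ᵥ v := by
  rw [powerSumJacobian_comp, submatrix_mulVec_equiv, Function.comp_assoc,
    Equiv.self_comp_symm, Function.comp_id, Function.comp_id]

theorem powerSumJacobian_isUnit_iff_and_equivariant_general (n : ℕ) :
    (∀ z : Fin n → ℂ, IsUnit (powerSumJacobian n z) ↔ Function.Injective z) ∧
    (∀ (σ : Equiv.Perm (Fin n)) (z v : Fin n → ℂ),
      (powerSumJacobian n (fun i => z (σ⁻¹ i))).mulVec (fun i => v (σ⁻¹ i)) =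
        (powerSumJacobian n z).mulVec v) :=
  ⟨isUnit_powerSumJacobian_iff n, fun σ => powerSumJacobian_comp_perm_mulVec n σ⁻¹⟩

/-- **The Vandermonde-spiral trivialization.** (a) The Jacobian `J(z)` of the power-sum
map is invertible exactly when the points `z_1, …, z_n` are pairwise distinct, and
(b) it satisfies the equivariance relation `J(σ·z)(σ·v) = J(z)(v)` for every
permutation `σ`.  Hence `z ↦ J(z)` is a holomorphic equivariant trivialization of the
quotient of the trivial bundle `X_n × ℂ^n` over the configuration space `X_n`. -/
theorem powerSumJacobian_isUnit_iff_and_equivariant (n : ℕ) (hn : 1 ≤ n) :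
    (∀ z : Fin n → ℂ, IsUnit (powerSumJacobian n z) ↔ Function.Injective z) ∧
    (∀ (σ : Equiv.Perm (Fin n)) (z v : Fin n → ℂ),
      (powerSumJacobian n (fun i => z (σ⁻¹ i))).mulVec (fun i => v (σ⁻¹ i)) =
        (powerSumJacobian n z).mulVec v) :=
  powerSumJacobian_isUnit_iff_and_equivariant_general n
end

section
/- Let W = G(2,1,4) be the group of signed permutation 4×4 matrices (monomial matrices with nonzero entries ±1), the Coxeter group of type B_4 inside GL_4(ℂ). The subring of the ring of functions W → ℂ generated by all one-dimensional characters (group homomorphisms W → ℂ^×) together with the characters of the exterior powers Λ^k(ℂ⁴) of the natural four-dimensional representation, 0 ≤ k ≤ 4, does NOT contain the character of every irreducible complex representation of W: there exists an irreducible character of W not lying in this subring. -/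
noncomputable section

open Matrix

/-- Functorial action of a linear endomorphism on the `k`-th exterior power. -/
def extPowMap (k : ℕ) {M : Type*} [AddCommGroup M] [Module ℂ M]
    (g : M →ₗ[ℂ] M) : ⋀[ℂ]^k M →ₗ[ℂ] ⋀[ℂ]^k M :=
  ((ExteriorAlgebra.map g).toLinearMap).restrict (p := ⋀[ℂ]^k M) (q := ⋀[ℂ]^k M)
    (fun x hx => by
      have h2 : Submodule.map (ExteriorAlgebra.map g).toLinearMap
          (LinearMap.range (ExteriorAlgebra.ι ℂ : M →ₗ[ℂ] ExteriorAlgebra ℂ M)) ≤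
          LinearMap.range (ExteriorAlgebra.ι ℂ : M →ₗ[ℂ] ExteriorAlgebra ℂ M) := by
        rw [ExteriorAlgebra.ι_range_map_map]
        rintro y ⟨m, _, rfl⟩
        exact ⟨m, rfl⟩
      have h3 : ∀ m : ℕ, (Submodule.map (ExteriorAlgebra.map g).toLinearMap
          (LinearMap.range (ExteriorAlgebra.ι ℂ : M →ₗ[ℂ] ExteriorAlgebra ℂ M)))^m ≤
          (LinearMap.range (ExteriorAlgebra.ι ℂ : M →ₗ[ℂ] ExteriorAlgebra ℂ M))^m := by
        intro m
        induction m with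
        | zero => simp
        | succ m ih => rw [pow_succ, pow_succ]; exact mul_le_mul' ih h2
      have h1 : Submodule.map (ExteriorAlgebra.map g).toLinearMap (⋀[ℂ]^k M) ≤ ⋀[ℂ]^k M := by
        rw [Submodule.map_pow]
        exact h3 k
      exact h1 ⟨x, hx, rfl⟩)


/-!
`W = G(2,1,4)` acts on the six `2`-subsets `{a, b}` of `{0, 1, 2, 3}` by signed permutations,
`w • e_{a,b} = c_a c_b e_{σ a, σ b}` for `w = monoMat σ c`. This representation is irreducible:
the sign changes act diagonally on the basis `e_{a,b}` with pairwise distinct characters, and the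
permutations move the basis vectors transitively. Its character is `2` at the double
transposition `(0 1)(2 3)` and `-2` at `diag(1, 1, -1, -1)`. These two elements are conjugate in
`GL₄(ℂ)`, so every character of `Λᵏ(ℂ⁴)` takes the same value at both, and each is a product of
two involutions that are conjugate in `W`, so every one-dimensional character is `1` at both.
Hence every element of the subring generated by these characters takes equal values at the two
elements.
-/

open Equiv Pointwise

section MonomialMatrix

variable {r : ℕ}

lemma eq_and_eq_of_monoMat_eq {σ τ : Perm (Fin r)} {c b : Fin r → ℂ} (hc : ∀ j, c j ≠ 0)
    (h : monoMat σ c = monoMat τ b) : σ = τ ∧ c = b := by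
  have hentry : ∀ j, c j = if σ j = τ j then b j else 0 := fun j => by
    simpa [monoMat] using congrFun (congrFun h (σ j)) j
  have hσ : ∀ j, σ j = τ j := fun j => by
    by_contra hne
    exact hc j (by simpa [hne] using hentry j)
  exact ⟨Equiv.ext hσ, funext fun j => by simpa [hσ j] using hentry j⟩

lemma monoMat_one_eq_diagonal (c : Fin r → ℂ) : monoMat 1 c = diagonal c := by
  ext i j
  rcases eq_or_ne i j with rfl | h
  · simp [monoMat]
  · simp [monoMat, h]

lemma monoMat_mulVec_single (σ : Perm (Fin r)) (c : Fin r → ℂ) (j : Fin r) :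
    monoMat σ c *ᵥ Pi.single j 1 = Pi.single (σ j) (c j) := by
  ext i
  simp [monoMat, Pi.single_apply]

lemma trace_monoMat (σ : Perm (Fin r)) (c : Fin r → ℂ) :
    trace (monoMat σ c) = ∑ j, if σ j = j then c j else 0 := by
  simp [trace, monoMat, eq_comm]

end MonomialMatrix

section Irreducible

variable {K ι : Type*} [Field K] [Fintype ι] [DecidableEq ι]

def IsIrreducibleMatrixRep {G : Type*} [Group G] (ρ : G →* GL ι K) : Prop :=
  ∀ p : Submodule K (ι → K),
    (∀ g, ∀ v ∈ p, (ρ g : Matrix ι ι K) *ᵥ v ∈ p) → p = ⊥ ∨ p = ⊤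

lemma Subalgebra.single_one_mem_of_separates (A : Subalgebra K (ι → K))
    (hA : ∀ s t, s ≠ t → ∃ f ∈ A, f s ≠ f t) (s : ι) : Pi.single s 1 ∈ A := by
  choose! f hfA hf using hA s
  have hprod : (Pi.single s 1 : ι → K) = ∏ t ∈ Finset.univ.erase s,
      (f t s - f t t)⁻¹ • (f t - algebraMap K (ι → K) (f t t)) := by
    ext x
    rw [Finset.prod_apply]
    by_cases hx : x = s
    · subst hx
      rw [Pi.single_eq_same, eq_comm]
      refine Finset.prod_eq_one fun t ht => ?_
      simp [inv_mul_cancel₀ (sub_ne_zero.mpr (hf t (Finset.ne_of_mem_erase ht).symm))]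
    · rw [Pi.single_eq_of_ne hx, eq_comm]
      exact Finset.prod_eq_zero (Finset.mem_erase.mpr ⟨hx, Finset.mem_univ x⟩) (by simp)
  rw [hprod]
  exact Subalgebra.prod_mem _ fun t ht =>
    A.smul_mem (A.sub_mem (hfA t (Finset.ne_of_mem_erase ht).symm) (A.algebraMap_mem _)) _

def Submodule.multipliers (p : Submodule K (ι → K)) : Subalgebra K (ι → K) where
  carrier := {f | ∀ v ∈ p, f * v ∈ p}
  mul_mem' {f g} hf hg v hv := by simpa [mul_assoc] using hf _ (hg v hv)
  add_mem' {f g} hf hg v hv := by simpa [add_mul] using p.add_mem (hf v hv) (hg v hv)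
  algebraMap_mem' a v hv := by simpa [Algebra.algebraMap_eq_smul_one] using p.smul_mem a hv

theorem isIrreducibleMatrixRep_of_separates_of_transitive {G : Type*} [Group G]
    (ρ : G →* GL ι K)
    (hsep : ∀ s t, s ≠ t → ∃ g d, (ρ g : Matrix ι ι K) = diagonal d ∧ d s ≠ d t)
    (htrans : ∀ s t, ∃ g, (ρ g : Matrix ι ι K) *ᵥ Pi.single s 1 = Pi.single t 1) :
    IsIrreducibleMatrixRep ρ := by
  intro p hp
  refine or_iff_not_imp_left.mpr fun hbot => ?_
  obtain ⟨v, hv, hv0⟩ := (Submodule.ne_bot_iff p).mp hbot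
  obtain ⟨s, hs⟩ : ∃ s, v s ≠ 0 := by
    by_contra! h
    exact hv0 (funext h)
  have hmult : Pi.single s 1 ∈ p.multipliers := by
    refine Subalgebra.single_one_mem_of_separates _ (fun s t hst => ?_) s
    obtain ⟨g, d, hg, hd⟩ := hsep s t hst
    refine ⟨d, fun u hu => ?_, hd⟩
    have h := hp g u hu
    rwa [hg, funext (mulVec_diagonal d u)] at h
  have hsingle : Pi.single s 1 ∈ p := by
    have h := p.smul_mem (v s)⁻¹ (hmult v hv)
    rwa [← Pi.single_mul_left, one_mul, ← Pi.single_smul', smul_eq_mul,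
      inv_mul_cancel₀ hs] at h
  rw [eq_top_iff, ← (Pi.basisFun K ι).span_eq, Submodule.span_le]
  rintro _ ⟨t, rfl⟩
  obtain ⟨g, hg⟩ := htrans s t
  simpa [hg] using hp g _ hsingle

end Irreducible

section ExteriorPower

variable {M : Type*} [AddCommGroup M] [Module ℂ M]

lemma extPowMap_comp (k : ℕ) (f g : M →ₗ[ℂ] M) :
    extPowMap k (f ∘ₗ g) = extPowMap k f ∘ₗ extPowMap k g := by
  refine LinearMap.ext fun x => Subtype.ext ?_
  simp only [LinearMap.comp_apply, extPowMap, LinearMap.coe_restrict_apply]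
  rw [← ExteriorAlgebra.map_comp_map g f]
  rfl

lemma trace_extPowMap_comp_comm [Module.Finite ℂ M] (k : ℕ) (f g : M →ₗ[ℂ] M) :
    LinearMap.trace ℂ _ (extPowMap k (f ∘ₗ g)) =
      LinearMap.trace ℂ _ (extPowMap k (g ∘ₗ f)) := by
  rw [extPowMap_comp, extPowMap_comp, LinearMap.trace_comp_comm']

lemma trace_extPowMap_mulVecLin_eq_of_mul_eq {n : Type*} [Fintype n] [DecidableEq n]
    (k : ℕ) {A B P Q : Matrix n n ℂ} (hPQ : P * Q = 1) (hAP : A * P = P * B) :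
    LinearMap.trace ℂ _ (extPowMap k A.mulVecLin) =
      LinearMap.trace ℂ _ (extPowMap k B.mulVecLin) := by
  have hA : A = P * (B * Q) := by rw [← mul_assoc, ← hAP, mul_assoc, hPQ, mul_one]
  rw [hA, mulVecLin_mul, trace_extPowMap_comp_comm, ← mulVecLin_mul, mul_assoc,
    mul_eq_one_comm.mp hPQ, mul_one]

end ExteriorPower

lemma MonoidHom.map_mul_eq_one_of_isConj {G M : Type*} [Group G] [CommMonoid M] (χ : G →* M)
    {a b : G} (hab : IsConj a b) (ha : a * a = 1) : χ (a * b) = 1 := by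
  rw [map_mul, ← isConj_iff_eq.mp (χ.map_isConj hab), ← map_mul, ha, map_one]

lemma Subring.apply_eq_apply_of_mem_closure {X R : Type*} [Ring R] {S : Set (X → R)} {x y : X}
    (hS : ∀ f ∈ S, f x = f y) {f : X → R} (hf : f ∈ Subring.closure S) : f x = f y :=
  (Subring.closure_le
    (t := RingHom.eqLocus (Pi.evalRingHom (fun _ => R) x) (Pi.evalRingHom (fun _ => R) y))).mpr
    (fun f hf => hS f hf) hf

namespace Gdeer

section SignedPerm

variable {r : ℕ}

def signedPerm (σ : Perm (Fin r)) (ε : Fin r → ℤˣ) : Gdeer 2 1 r :=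
  ⟨⟨monoMat σ (fun i => ((ε i : ℤ) : ℂ)),
    monoMat σ⁻¹ (fun i => ((ε (σ⁻¹ i) : ℤ) : ℂ)),
    by
      rw [monoMat_mul, mul_inv_cancel, ← monoMat_one]
      congr 1
      ext i
      norm_cast
      simp,
    by
      rw [monoMat_mul, inv_mul_cancel, ← monoMat_one]
      congr 1
      ext i
      norm_cast
      simp⟩,
   σ, _, fun i => by norm_cast; simp [Int.units_sq],
   by rw [sq, ← Finset.prod_mul_distrib]; norm_cast; simp, rfl⟩

lemma coe_signedPerm (σ : Perm (Fin r)) (ε : Fin r → ℤˣ) :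
    ((signedPerm σ ε : GL (Fin r) ℂ) : Matrix (Fin r) (Fin r) ℂ) =
      monoMat σ (fun i => ((ε i : ℤ) : ℂ)) := rfl

lemma signedPerm_mul (σ τ : Perm (Fin r)) (ε δ : Fin r → ℤˣ) :
    signedPerm σ ε * signedPerm τ δ = signedPerm (σ * τ) (fun j => ε (τ j) * δ j) := by
  apply Subtype.ext
  apply Units.ext
  change monoMat σ _ * monoMat τ _ = monoMat (σ * τ) _
  rw [monoMat_mul]
  push_cast
  rfl

lemma signedPerm_one : signedPerm (1 : Perm (Fin r)) 1 = 1 := by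
  apply Subtype.ext
  apply Units.ext
  rw [coe_signedPerm]
  simp only [Pi.one_apply, Units.val_one, Int.cast_one]
  exact monoMat_one

def perm (w : Gdeer 2 1 r) : Perm (Fin r) := w.2.choose

def signs (w : Gdeer 2 1 r) : Fin r → ℂ := w.2.choose_spec.choose

lemma coe_eq_monoMat (w : Gdeer 2 1 r) :
    ((w : GL (Fin r) ℂ) : Matrix (Fin r) (Fin r) ℂ) = monoMat (perm w) (signs w) :=
  w.2.choose_spec.choose_spec.2.2

lemma signs_ne_zero (w : Gdeer 2 1 r) (i : Fin r) : signs w i ≠ 0 := by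
  intro h
  have hsq : signs w i ^ (2 * 1) = 1 := w.2.choose_spec.choose_spec.1 i
  simp [h] at hsq

lemma perm_eq_and_signs_eq {w : Gdeer 2 1 r} {σ : Perm (Fin r)} {c : Fin r → ℂ}
    (hw : ((w : GL (Fin r) ℂ) : Matrix (Fin r) (Fin r) ℂ) = monoMat σ c) :
    perm w = σ ∧ signs w = c :=
  eq_and_eq_of_monoMat_eq (signs_ne_zero w) ((coe_eq_monoMat w).symm.trans hw)

lemma perm_mul_and_signs_mul (w w' : Gdeer 2 1 r) :
    perm (w * w') = perm w * perm w' ∧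
      signs (w * w') = fun j => signs w (perm w' j) * signs w' j :=
  perm_eq_and_signs_eq <| by
    rw [Subgroup.coe_mul, Units.val_mul, coe_eq_monoMat, coe_eq_monoMat, monoMat_mul]

lemma perm_one_and_signs_one : perm (1 : Gdeer 2 1 r) = 1 ∧ signs (1 : Gdeer 2 1 r) = 1 :=
  perm_eq_and_signs_eq monoMat_one.symm

lemma perm_signedPerm_and_signs_signedPerm (σ : Perm (Fin r)) (ε : Fin r → ℤˣ) :
    perm (signedPerm σ ε) = σ ∧ signs (signedPerm σ ε) = fun i => ((ε i : ℤ) : ℂ) :=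
  perm_eq_and_signs_eq (coe_signedPerm σ ε)

end SignedPerm

section PowersetCardRep

variable (r k : ℕ)

lemma card_powersetCard_fin : Fintype.card (Set.powersetCard (Fin r) k) = r.choose k := by
  simpa using Set.powersetCard.card (α := Fin r) (n := k)

def powersetCardEquiv : Set.powersetCard (Fin r) k ≃ Fin (r.choose k) :=
  Fintype.equivFinOfCardEq (card_powersetCard_fin r k)

def powersetCardPerm : Perm (Fin r) →* Perm (Fin (r.choose k)) :=
  (powersetCardEquiv r k).permCongrHom.toMonoidHom.comp (MulAction.toPermHom _ _)

def powersetCardMatrix (w : Gdeer 2 1 r) : Matrix (Fin (r.choose k)) (Fin (r.choose k)) ℂ :=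
  monoMat (powersetCardPerm r k (perm w))
    fun S => ∏ i ∈ ((powersetCardEquiv r k).symm S : Finset (Fin r)), signs w i

variable {r k}

lemma powersetCardEquiv_symm_perm (σ : Perm (Fin r)) (S : Fin (r.choose k)) :
    (powersetCardEquiv r k).symm (powersetCardPerm r k σ S) =
      σ • (powersetCardEquiv r k).symm S := by
  simp [powersetCardPerm, Equiv.permCongrHom_coe]

lemma powersetCardMatrix_mul (w w' : Gdeer 2 1 r) :
    powersetCardMatrix r k (w * w') = powersetCardMatrix r k w * powersetCardMatrix r k w' := by
  obtain ⟨hperm, hsigns⟩ := perm_mul_and_signs_mul w w'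
  rw [powersetCardMatrix, powersetCardMatrix, powersetCardMatrix, monoMat_mul, hperm, hsigns,
    map_mul]
  congr 1
  funext S
  rw [Finset.prod_mul_distrib, powersetCardEquiv_symm_perm, Set.powersetCard.coe_smul,
    Finset.smul_finset_def,
    Finset.prod_image (g := (perm w' • ·)) fun i _ j _ h => (perm w').injective h]
  rfl

variable (r k)

def powersetCardRep : Gdeer 2 1 r →* GL (Fin (r.choose k)) ℂ :=
  MonoidHom.toHomUnits
    { toFun := powersetCardMatrix r k
      map_one' := by
        rw [powersetCardMatrix, perm_one_and_signs_one.1, perm_one_and_signs_one.2, map_one]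
        simp only [Pi.one_apply, Finset.prod_const_one]
        exact monoMat_one
      map_mul' := powersetCardMatrix_mul }

variable {r k}

lemma coe_powersetCardRep_signedPerm (σ : Perm (Fin r)) (ε : Fin r → ℤˣ) :
    ((powersetCardRep r k (signedPerm σ ε) : GL (Fin (r.choose k)) ℂ) :
      Matrix (Fin (r.choose k)) (Fin (r.choose k)) ℂ) =
      monoMat (powersetCardPerm r k σ) fun S =>
        ((∏ i ∈ ((powersetCardEquiv r k).symm S : Finset (Fin r)), ε i : ℤˣ) : ℤ) := by
  obtain ⟨hperm, hsigns⟩ := perm_signedPerm_and_signs_signedPerm σ ε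
  change monoMat _ _ = _
  rw [hperm, hsigns]
  push_cast
  rfl

lemma trace_powersetCardRep_signedPerm (σ : Perm (Fin r)) (ε : Fin r → ℤˣ) :
    trace ((powersetCardRep r k (signedPerm σ ε) : GL (Fin (r.choose k)) ℂ) :
      Matrix (Fin (r.choose k)) (Fin (r.choose k)) ℂ) =
      ((∑ S ∈ Finset.powersetCard k Finset.univ,
        if σ • S = S then ∏ i ∈ S, (ε i : ℤ) else 0 : ℤ) : ℂ) := by
  rw [coe_powersetCardRep_signedPerm, trace_monoMat, ← (powersetCardEquiv r k).sum_comp]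
  push_cast
  rw [Finset.sum_subtype _ (p := (· ∈ Set.powersetCard (Fin r) k))
    fun S => by simp [Set.powersetCard.mem_iff]]
  refine Fintype.sum_congr _ _ fun S => ?_
  simp only [← (powersetCardEquiv r k).symm.injective.eq_iff, powersetCardEquiv_symm_perm,
    Equiv.symm_apply_apply, ← Subtype.coe_inj (a := σ • S), Set.powersetCard.coe_smul]

theorem isIrreducibleMatrixRep_powersetCardRep (r k : ℕ) :
    IsIrreducibleMatrixRep (powersetCardRep r k) := by
  refine isIrreducibleMatrixRep_of_separates_of_transitive _ (fun s t hst => ?_) fun s t => ?_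
  · obtain ⟨a, has, hat⟩ := (Set.powersetCard.exists_mem_notMem_iff_ne _ _).mp
      ((powersetCardEquiv r k).symm.injective.ne hst)
    refine ⟨signedPerm 1 (Pi.mulSingle a (-1)), ?_⟩
    rw [coe_powersetCardRep_signedPerm, map_one, monoMat_one_eq_diagonal]
    refine ⟨_, rfl, ?_⟩
    simp only [Finset.prod_pi_mulSingle', Set.powersetCard.mem_coe_iff, has, hat, if_true,
      if_false]
    norm_num
  · obtain ⟨σ, hσ⟩ :=
      (Set.powersetCard.isPretransitive (α := Fin r) (n := k)).exists_smul_eq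
        ((powersetCardEquiv r k).symm s) ((powersetCardEquiv r k).symm t)
    refine ⟨signedPerm σ 1, ?_⟩
    rw [coe_powersetCardRep_signedPerm, monoMat_mulVec_single,
      ← (powersetCardEquiv r k).symm.injective.eq_iff.mp
        ((powersetCardEquiv_symm_perm σ s).trans hσ)]
    simp

end PowersetCardRep

section TypeB4

def doubleTransposition : Gdeer 2 1 4 := signedPerm (swap 0 1) 1 * signedPerm (swap 2 3) 1

def doubleSignChange : Gdeer 2 1 4 :=
  signedPerm 1 (Pi.mulSingle 2 (-1)) * signedPerm 1 (Pi.mulSingle 3 (-1))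

lemma map_doubleTransposition_eq_one {M : Type*} [CommMonoid M] (χ : Gdeer 2 1 4 →* M) :
    χ doubleTransposition = 1 := by
  refine χ.map_mul_eq_one_of_isConj
    (isConj_iff.mpr ⟨signedPerm (swap 0 2 * swap 1 3) 1, ?_⟩) ?_
  · rw [mul_inv_eq_iff_eq_mul, signedPerm_mul, signedPerm_mul]
    exact congrArg₂ signedPerm (by decide) (by decide)
  · rw [signedPerm_mul, ← signedPerm_one]
    exact congrArg₂ signedPerm (by decide) (by decide)

lemma map_doubleSignChange_eq_one {M : Type*} [CommMonoid M] (χ : Gdeer 2 1 4 →* M) :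
    χ doubleSignChange = 1 := by
  refine χ.map_mul_eq_one_of_isConj (isConj_iff.mpr ⟨signedPerm (swap 2 3) 1, ?_⟩) ?_
  · rw [mul_inv_eq_iff_eq_mul, signedPerm_mul, signedPerm_mul]
    exact congrArg₂ signedPerm (by decide) (by decide)
  · rw [signedPerm_mul, ← signedPerm_one]
    exact congrArg₂ signedPerm (by decide) (by decide)

lemma coe_doubleTransposition :
    ((doubleTransposition : GL (Fin 4) ℂ) : Matrix (Fin 4) (Fin 4) ℂ) =
      !![0, 1, 0, 0; 1, 0, 0, 0; 0, 0, 0, 1; 0, 0, 1, 0] := by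
  rw [doubleTransposition, signedPerm_mul, coe_signedPerm]
  ext i j
  fin_cases i <;> fin_cases j <;> simp [monoMat, swap_apply_def]

lemma coe_doubleSignChange :
    ((doubleSignChange : GL (Fin 4) ℂ) : Matrix (Fin 4) (Fin 4) ℂ) =
      !![1, 0, 0, 0; 0, 1, 0, 0; 0, 0, -1, 0; 0, 0, 0, -1] := by
  rw [doubleSignChange, signedPerm_mul, coe_signedPerm]
  ext i j
  fin_cases i <;> fin_cases j <;> simp [monoMat, Pi.mulSingle_apply]

lemma trace_extPowMap_doubleTransposition_eq_doubleSignChange (k : ℕ) :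
    LinearMap.trace ℂ _ (extPowMap k
      ((doubleTransposition : GL (Fin 4) ℂ) : Matrix (Fin 4) (Fin 4) ℂ).mulVecLin) =
    LinearMap.trace ℂ _ (extPowMap k
      ((doubleSignChange : GL (Fin 4) ℂ) : Matrix (Fin 4) (Fin 4) ℂ).mulVecLin) := by
  -- the columns of `P` are eigenvectors of the double transposition
  let P : Matrix (Fin 4) (Fin 4) ℂ := !![1, 0, 1, 0; 1, 0, -1, 0; 0, 1, 0, 1; 0, 1, 0, -1]
  let Q : Matrix (Fin 4) (Fin 4) ℂ :=
    !![1/2, 1/2, 0, 0; 0, 0, 1/2, 1/2; 1/2, -1/2, 0, 0; 0, 0, 1/2, -1/2]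
  refine trace_extPowMap_mulVecLin_eq_of_mul_eq k (P := P) (Q := Q) ?_ ?_
  · ext i j
    fin_cases i <;> fin_cases j <;>
      norm_num [P, Q, mul_apply, Fin.sum_univ_four, cons_val_two, cons_val_three]
  · rw [coe_doubleTransposition, coe_doubleSignChange]
    ext i j
    fin_cases i <;> fin_cases j <;>
      norm_num [P, mul_apply, Fin.sum_univ_four, cons_val_two, cons_val_three]

lemma trace_powersetCardRep_doubleTransposition :
    trace ((powersetCardRep 4 2 doubleTransposition : GL (Fin (Nat.choose 4 2)) ℂ) :
      Matrix (Fin (Nat.choose 4 2)) (Fin (Nat.choose 4 2)) ℂ) = 2 := by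
  rw [doubleTransposition, signedPerm_mul, trace_powersetCardRep_signedPerm,
    show (2 : ℂ) = ((2 : ℤ) : ℂ) by norm_num, Int.cast_inj]
  decide

lemma trace_powersetCardRep_doubleSignChange :
    trace ((powersetCardRep 4 2 doubleSignChange : GL (Fin (Nat.choose 4 2)) ℂ) :
      Matrix (Fin (Nat.choose 4 2)) (Fin (Nat.choose 4 2)) ℂ) = -2 := by
  rw [doubleSignChange, signedPerm_mul, trace_powersetCardRep_signedPerm,
    show (-2 : ℂ) = ((-2 : ℤ) : ℂ) by norm_num, Int.cast_inj]
  decide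

end TypeB4

end Gdeer

/-- **The representation ring of the Coxeter group of type `B_4` is NOT generated by the
one-dimensional representations and the exterior powers of the natural representation.**
For `W = G(2,1,4)` the group of signed permutation `4×4` matrices, there exists an
irreducible complex representation of `W` whose character does not lie in the subring of
functions `W → ℂ` generated by all one-dimensional characters together with the
characters of `Λ^k(ℂ⁴)`, `0 ≤ k ≤ 4`. -/
theorem repRing_B4_not_generated :
    ∃ (N : ℕ) (ρ : Gdeer 2 1 4 →* GL (Fin N) ℂ),
      (∀ p : Submodule ℂ (Fin N → ℂ),
        (∀ w : Gdeer 2 1 4, ∀ v ∈ p,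
          (ρ w : Matrix (Fin N) (Fin N) ℂ).mulVec v ∈ p) → p = ⊥ ∨ p = ⊤) ∧
      (fun w => Matrix.trace (ρ w : Matrix (Fin N) (Fin N) ℂ)) ∉
        Subring.closure
          ({f : Gdeer 2 1 4 → ℂ | ∃ χ : Gdeer 2 1 4 →* ℂˣ, f = fun w => (χ w : ℂ)} ∪
            {f : Gdeer 2 1 4 → ℂ | ∃ k ≤ 4, f = fun (w : Gdeer 2 1 4) =>
              LinearMap.trace ℂ (⋀[ℂ]^k (Fin 4 → ℂ))
                (extPowMap k
                  (((w : GL (Fin 4) ℂ) : Matrix (Fin 4) (Fin 4) ℂ).mulVecLin))}) := by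
  refine ⟨_, Gdeer.powersetCardRep 4 2, Gdeer.isIrreducibleMatrixRep_powersetCardRep 4 2,
    fun hmem => ?_⟩
  have htrace := Subring.apply_eq_apply_of_mem_closure
    (x := Gdeer.doubleTransposition) (y := Gdeer.doubleSignChange) ?_ hmem
  · rw [Gdeer.trace_powersetCardRep_doubleTransposition,
      Gdeer.trace_powersetCardRep_doubleSignChange] at htrace
    norm_num at htrace
  · rintro f (⟨χ, rfl⟩ | ⟨k, -, rfl⟩)
    · simp [Gdeer.map_doubleTransposition_eq_one, Gdeer.map_doubleSignChange_eq_one]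
    · exact Gdeer.trace_extPowMap_doubleTransposition_eq_doubleSignChange k
end
end
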